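/- arXiv:math/0605060 — 6 statements merged into one kernel-verified Lean document; each statement's English description precedes it below -/
import Mathlib

section
/- The number of inversions and the major index are equidistributed on the symmetric group: for every n, the sum over all permutations σ of S_n of q^{maj(σ)} equals the sum of q^{inv(σ)}, and both equal the q-factorial [n]_q! = ∏_{i=1}^n (1-q^i)/(1-q). -/
open Finset

namespace Paper

/-- The word of `σ` at 0-based position `i`, with 0-based values (`0` outside range). -/
def wrd {n : ℕ} (σ : Equiv.Perm (Fin n)) (i : ℕ) : ℕ :=
  if h : i < n then (σ ⟨i, h⟩ : ℕ) else 0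

/-- The descent set of `σ`, in 1-based positions: `{ i ∈ {1,…,n-1} | σ(i) > σ(i+1) }`. -/
def Des {n : ℕ} (σ : Equiv.Perm (Fin n)) : Finset ℕ :=
  (Finset.Ioo 0 n).filter fun i => wrd σ i < wrd σ (i - 1)

/-- The major index: the sum of the (1-based) descent positions. -/
def maj {n : ℕ} (σ : Equiv.Perm (Fin n)) : ℕ := ∑ i ∈ Des σ, i

/-- The number of descents. -/
def des {n : ℕ} (σ : Equiv.Perm (Fin n)) : ℕ := (Des σ).card

/-- The number of inversions. -/
def inv {n : ℕ} (σ : Equiv.Perm (Fin n)) : ℕ :=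
  (Finset.univ.filter fun p : Fin n × Fin n => p.1 < p.2 ∧ σ p.2 < σ p.1).card

/-- The Lehmer code, as a function `ℕ → ℕ` (0-based index, zero outside `[0, n)`):
`Lc σ i = #{ j > i | σ(j) < σ(i) }`. -/
def Lc {n : ℕ} (σ : Equiv.Perm (Fin n)) (i : ℕ) : ℕ :=
  if h : i < n then (Finset.univ.filter fun j : Fin n => i < (j : ℕ) ∧ σ j < σ ⟨i, h⟩).card
  else 0

/-- The inversion code (invcode) is the Lehmer code of the inverse. -/
def Ic {n : ℕ} (σ : Equiv.Perm (Fin n)) : ℕ → ℕ := Lc σ⁻¹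

/-- The word of a permutation, with 1-based values. -/
def word {n : ℕ} (σ : Equiv.Perm (Fin n)) : List ℕ := List.ofFn fun i => (σ i : ℕ) + 1

/-- The major index of a word: the sum of the 1-based positions `t` with `w_t > w_{t+1}`. -/
def majL (l : List ℕ) : ℕ :=
  ∑ t ∈ Finset.range (l.length - 1), if l.getD (t + 1) 0 < l.getD t 0 then t + 1 else 0

/-- The major code, as a function `ℕ → ℕ` (0-based index `i`, i.e. paper's `m_{i+1}`):
`m_i = maj(σ^{(i)}) - maj(σ^{(i+1)})` where `σ^{(i)}` keeps only the letters `≥ i`. -/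
def Mc {n : ℕ} (σ : Equiv.Perm (Fin n)) (i : ℕ) : ℕ :=
  majL ((word σ).filter fun x => decide (i + 1 ≤ x)) -
    majL ((word σ).filter fun x => decide (i + 2 ≤ x))

/-- The saillance code, as a function `ℕ → ℕ` (0-based index `i`, i.e. about the letter of
0-based value `i`): the number of letters of `σ` that are `≥` the rightmost letter located to
the left of `i` and greater than `i` (0 if there is no such letter). -/
def Sc {n : ℕ} (σ : Equiv.Perm (Fin n)) (i : ℕ) : ℕ :=
  if h : i < n then
    let L := Finset.univ.filter fun j : Fin n => j < σ⁻¹ ⟨i, h⟩ ∧ (⟨i, h⟩ : Fin n) < σ j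
    if hL : L.Nonempty then n - (σ (L.max' hL) : ℕ) else 0
  else 0

/-- Sub-diagonal sequences, as functions `ℕ → ℕ` supported on `[0, n)` with
`c_i ≤ n - 1 - i` there (0-based; i.e. `0 ≤ c_i ≤ n - i` in 1-based indexing). -/
def SubDiag (n : ℕ) : Set (ℕ → ℕ) :=
  {c | (∀ i, i < n → c i + i < n) ∧ ∀ i, n ≤ i → c i = 0}

/-- The permutation `τ_M(β)` of `{0,…,n}`: `τ_M(β)(i) = des(β) - j` if `i` is the `j`-th
descent of `β`, and `τ_M(β)(i) = des(β) + j - 1` if `i` is the `j`-th rise (position `0`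
counting as a rise). -/
def tauM {n : ℕ} (β : Equiv.Perm (Fin n)) (i : ℕ) : ℕ :=
  if i ∈ Des β then des β - ((Des β).filter fun d => d ≤ i).card
  else des β + ((Finset.range (i + 1)).filter fun r => r ∉ Des β).card - 1

/-- The permutation `τ_S(β)` of `{0,…,n}`: `τ_S(β)(0) = 0` and `τ_S(β)(i) = n + 1 - β(i)`
(1-based values) for `1 ≤ i ≤ n`. -/
def tauS {n : ℕ} (β : Equiv.Perm (Fin n)) (i : ℕ) : ℕ :=
  if h : 1 ≤ i ∧ i ≤ n then n - (β ⟨i - 1, by omega⟩ : ℕ) else 0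

/-- The complete homogeneous symmetric polynomial `h_k(X_m)` in the variables
`x_0, …, x_m`. -/
noncomputable def hpoly (k m : ℕ) : MvPolynomial ℕ ℤ :=
  ∑ f ∈ Finset.univ.filter (fun f : Fin k → Fin (m + 1) => ∀ a b : Fin k, a ≤ b → f a ≤ f b),
    ∏ t : Fin k, MvPolynomial.X ((f t : ℕ))

/-- The (proper) descent set of a composition `I = (i_1,…,i_r)`:
`{i_1, i_1+i_2, …, i_1+⋯+i_{r-1}}`. -/
def DesComp (I : List ℕ) : Finset ℕ :=
  (Finset.range (I.length - 1)).image fun k => (I.take (k + 1)).sum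

end Paper

/-!
MacMahon's argument: every permutation of `Fin (n + 1)` arises exactly once by inserting the
largest letter `n` into a permutation `τ` of `Fin n` at one of its `n + 1` slots. Inserting it in
slot `p` creates `n - p` new inversions, and raises `maj τ` by the label of slot `p`, where the
slot at the right end is labelled `0`, the descent slots, read from right to left, `1, …, des τ`,
and the remaining slots, read from left to right, `des τ + 1, …, n`. In both cases the increments
run through `0, …, n` once each, so both generating functions obey the recursion
`F (n + 1) = [n + 1]_q * F n` of the `q`-factorial.
-/

namespace Finset

theorem sum_card_filter_lt {α M : Type*} [LinearOrder α] [AddCommMonoid M] (s : Finset α)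
    (f : ℕ → M) : ∑ a ∈ s, f #{b ∈ s | b < a} = ∑ i ∈ range #s, f i := by
  induction s using Finset.induction_on_max with
  | empty => simp
  | insert a s ha ih =>
    have has : a ∉ s := fun h => lt_irrefl a (ha a h)
    rw [sum_insert has, card_insert_of_notMem has, sum_range_succ, add_comm, ← ih,
      filter_insert, if_neg (lt_irrefl a), filter_true_of_mem ha]
    congr 1
    refine sum_congr rfl fun x hx => ?_
    rw [filter_insert, if_neg (not_lt.2 (ha x hx).le)]

theorem sum_card_filter_gt {α M : Type*} [LinearOrder α] [AddCommMonoid M] (s : Finset α)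
    (f : ℕ → M) : ∑ a ∈ s, f #{b ∈ s | a < b} = ∑ i ∈ range #s, f i :=
  sum_card_filter_lt (α := αᵒᵈ) s f

end Finset

namespace Paper

/-- Slot `p` is the gap in front of the letter at 0-based position `p`, so for the 1-based descent
set `D` it is a descent slot exactly when `p ∈ D`. -/
def slotLabel (D : Finset ℕ) (n p : ℕ) : ℕ :=
  if p ∈ D then #{d ∈ D | p < d} + 1
  else if p < n then #D + #{r ∈ range n \ D | r < p} + 1
  else 0

theorem sum_slotLabel {M : Type*} [AddCommMonoid M] {D : Finset ℕ} {n : ℕ} (hD : D ⊆ range n)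
    (f : ℕ → M) : ∑ p ∈ range (n + 1), f (slotLabel D n p) = ∑ j ∈ range (n + 1), f j := by
  have hdes : ∑ p ∈ D, f (slotLabel D n p) = ∑ j ∈ range #D, f (j + 1) := by
    rw [← sum_card_filter_gt D (fun j => f (j + 1))]
    exact sum_congr rfl fun p hp => by rw [slotLabel, if_pos hp]
  have hrise : ∑ p ∈ range n \ D, f (slotLabel D n p) =
      ∑ j ∈ range #(range n \ D), f (#D + j + 1) := by
    rw [← sum_card_filter_lt _ (fun j => f (#D + j + 1))]
    refine sum_congr rfl fun p hp => ?_
    rw [mem_sdiff, mem_range] at hp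
    rw [slotLabel, if_neg hp.2, if_pos hp.1]
  have hcard : #D + #(range n \ D) = n := by
    have := (card_le_card hD).trans_eq (card_range n)
    rw [card_sdiff_of_subset hD, card_range]
    omega
  have hlast : slotLabel D n n = 0 := by
    rw [slotLabel, if_neg fun h => by simpa using hD h, if_neg (lt_irrefl n)]
  conv_rhs => rw [sum_range_succ', ← hcard, sum_range_add]
  rw [sum_range_succ, ← sum_sdiff hD, hdes, hrise, hlast]
  abel

theorem slotLabel_add_ite {D : Finset ℕ} {n p : ℕ} (hD : D ⊆ range n) (hp : p ≤ n) :
    slotLabel D n p + (if p ∈ D then p else 0) = #{d ∈ D | p < d} + if p < n then p + 1 else 0 := by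
  by_cases hpD : p ∈ D
  · rw [slotLabel, if_pos hpD, if_pos hpD, if_pos (mem_range.1 (hD hpD))]
    ring
  rcases hp.lt_or_eq with hpn | rfl
  · have hrise : {r ∈ range n \ D | r < p} = range p \ D := by
      ext r
      simp only [mem_filter, mem_sdiff, mem_range]
      grind
    have hbelow : range p ∩ D = {d ∈ D | d < p} := by
      ext d
      simp [and_comm]
    have hdes : {d ∈ D | ¬d < p} = {d ∈ D | p < d} :=
      filter_congr fun d hd => by grind
    have h₁ := card_sdiff_add_card_inter (range p) D
    have h₂ := card_filter_add_card_filter_not (s := D) (· < p)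
    rw [card_range, hbelow] at h₁
    rw [hdes] at h₂
    rw [slotLabel, if_neg hpD, if_neg hpD, if_pos hpn, if_pos hpn, hrise]
    omega
  · have hnone : {d ∈ D | p < d} = ∅ :=
      filter_false_of_mem fun d hd => by simpa using (mem_range.1 (hD hd)).le
    simp [slotLabel, hpD, hnone]

open Equiv

variable {n : ℕ}

def insertMax (p : Fin (n + 1)) (τ : Perm (Fin n)) : Perm (Fin (n + 1)) :=
  (finSuccEquiv' p).trans (τ.optionCongr.trans (finSuccEquiv' (Fin.last n)).symm)

@[simp]
theorem insertMax_apply_self (p : Fin (n + 1)) (τ : Perm (Fin n)) :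
    insertMax p τ p = Fin.last n := by
  simp [insertMax]

@[simp]
theorem insertMax_apply_succAbove (p : Fin (n + 1)) (τ : Perm (Fin n)) (j : Fin n) :
    insertMax p τ (p.succAbove j) = (τ j).castSucc := by
  simp [insertMax]

theorem insertMax_symm_apply_last (p : Fin (n + 1)) (τ : Perm (Fin n)) :
    (insertMax p τ).symm (Fin.last n) = p := by
  rw [Equiv.symm_apply_eq, insertMax_apply_self]

theorem insertMax_apply_lt_last {p x : Fin (n + 1)} (τ : Perm (Fin n)) (hx : x ≠ p) :
    insertMax p τ x < Fin.last n := by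
  obtain ⟨j, rfl⟩ := Fin.exists_succAbove_eq hx
  simp

theorem insertMax_bijective :
    Function.Bijective fun x : Fin (n + 1) × Perm (Fin n) => insertMax x.1 x.2 := by
  rw [Fintype.bijective_iff_injective_and_card]
  refine ⟨fun ⟨p, τ⟩ ⟨p', τ'⟩ h => ?_, by simp [Fintype.card_perm, Nat.factorial_succ]⟩
  dsimp only at h
  obtain rfl : p = p' := by
    rw [← insertMax_symm_apply_last p τ, h, insertMax_symm_apply_last]
  refine Prod.ext rfl (Equiv.ext fun j => Fin.castSucc_injective _ ?_)
  rw [← insertMax_apply_succAbove, h, insertMax_apply_succAbove]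

theorem Des_subset_range (τ : Perm (Fin n)) : Des τ ⊆ range n :=
  fun _ hd => mem_range.2 (mem_Ioo.1 (mem_filter.1 hd).1).2

theorem wrd_lt (τ : Perm (Fin n)) {i : ℕ} (hi : i < n) : wrd τ i < n := by
  simp [wrd, hi]

theorem wrd_insertMax (p : Fin (n + 1)) (τ : Perm (Fin n)) (i : ℕ) :
    wrd (insertMax p τ) i = if i = p then n else if i < p then wrd τ i else wrd τ (i - 1) := by
  have hp := p.is_le
  by_cases hi : i < n + 1
  swap
  · rw [wrd, dif_neg hi, if_neg (by omega), if_neg (by omega), wrd, dif_neg (by omega)]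
  rcases eq_or_ne (⟨i, hi⟩ : Fin (n + 1)) p with hip | hne
  · rw [wrd, dif_pos hi, hip, insertMax_apply_self, if_pos (by rw [← hip]), Fin.val_last]
  obtain ⟨j, hj⟩ := Fin.exists_succAbove_eq hne
  have hval : i = if (j : ℕ) < p then (j : ℕ) else (j : ℕ) + 1 := by
    rw [← Fin.val_mk hi, ← hj, Fin.succAbove]
    split_ifs <;> simp_all [Fin.lt_def]
  rw [wrd, dif_pos hi, ← hj, insertMax_apply_succAbove]
  split_ifs at hval ⊢ <;> simp [wrd, hval] <;> omega

theorem mem_Des_insertMax (p : Fin (n + 1)) (τ : Perm (Fin n)) (i : ℕ) :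
    i ∈ Des (insertMax p τ) ↔
      (i ∈ Des τ ∧ i < p) ∨ (i = p + 1 ∧ (p : ℕ) < n) ∨ (i - 1 ∈ Des τ ∧ (p : ℕ) + 1 < i) := by
  have hp := p.is_le
  have h₁ := wrd_lt τ (i := p)
  have h₂ := wrd_lt τ (i := i - 1)
  have h₃ := wrd_lt τ (i := i - 1 - 1)
  simp only [Des, mem_filter, mem_Ioo, wrd_insertMax]
  split_ifs <;> omega

theorem Des_insertMax (p : Fin (n + 1)) (τ : Perm (Fin n)) :
    Des (insertMax p τ) = {d ∈ Des τ | d < (p : ℕ)} ∪ (if (p : ℕ) < n then {(p : ℕ) + 1} else ∅) ∪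
      {d ∈ Des τ | (p : ℕ) < d}.map (addRightEmbedding 1) := by
  ext i
  simp only [mem_Des_insertMax, mem_union, mem_filter, mem_map, addRightEmbedding_apply]
  split_ifs <;> simp <;> grind

theorem maj_insertMax_add_ite (p : Fin (n + 1)) (τ : Perm (Fin n)) :
    maj (insertMax p τ) + (if (p : ℕ) ∈ Des τ then (p : ℕ) else 0) =
      maj τ + #{d ∈ Des τ | (p : ℕ) < d} + if (p : ℕ) < n then (p : ℕ) + 1 else 0 := by
  have hsplit : ∑ d ∈ {d ∈ Des τ | d < (p : ℕ)}, d + ∑ d ∈ {d ∈ Des τ | (p : ℕ) < d}, (d + 1) +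
      (if (p : ℕ) ∈ Des τ then (p : ℕ) else 0) = maj τ + #{d ∈ Des τ | (p : ℕ) < d} := by
    rw [maj, sum_filter, sum_filter, card_filter, ← sum_ite_eq' (Des τ) (p : ℕ) fun d => d,
      ← sum_add_distrib, ← sum_add_distrib, ← sum_add_distrib]
    exact sum_congr rfl fun d _ => by split_ifs <;> omega
  have hdisj₁ : Disjoint {d ∈ Des τ | d < (p : ℕ)} (if (p : ℕ) < n then {(p : ℕ) + 1} else ∅) := by
    split_ifs <;> simp
  have hdisj₂ : Disjoint ({d ∈ Des τ | d < (p : ℕ)} ∪ if (p : ℕ) < n then {(p : ℕ) + 1} else ∅)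
      ({d ∈ Des τ | (p : ℕ) < d}.map (addRightEmbedding 1)) := by
    rw [disjoint_left]
    split_ifs <;> simp <;> grind
  rw [maj, Des_insertMax, sum_union hdisj₂, sum_union hdisj₁, sum_map, ← hsplit]
  split_ifs <;> simp <;> ring

theorem inv_insertMax (p : Fin (n + 1)) (τ : Perm (Fin n)) :
    inv (insertMax p τ) = inv τ + (n - p) := by
  have hfirst : ∑ b, (if p < b ∧ insertMax p τ b < insertMax p τ p then 1 else 0) = n - p := by
    rw [← card_filter, insertMax_apply_self]
    simp_rw [and_iff_left_of_imp fun h : p < _ => insertMax_apply_lt_last τ h.ne']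
    rw [filter_lt_eq_Ioi, Fin.card_Ioi]
    omega
  simp only [inv, card_filter, Fintype.sum_prod_type]
  rw [Fin.sum_univ_succAbove _ p, hfirst, add_comm]
  simp [Fin.sum_univ_succAbove _ p, Fin.succAbove_lt_succAbove_iff, not_lt_of_ge (Fin.le_last _)]

theorem maj_insertMax (p : Fin (n + 1)) (τ : Perm (Fin n)) :
    maj (insertMax p τ) = maj τ + slotLabel (Des τ) n p := by
  have h₁ := maj_insertMax_add_ite p τ
  have h₂ := slotLabel_add_ite (Des_subset_range τ) p.is_le
  omega

variable {R : Type*} [CommSemiring R]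

theorem sum_pow_eq_prod_of_insertMax (q : R) (s : (n : ℕ) → Perm (Fin n) → ℕ)
    (h₀ : s 0 1 = 0)
    (hs : ∀ n (τ : Perm (Fin n)),
      ∑ p, q ^ s (n + 1) (insertMax p τ) = q ^ s n τ * ∑ j ∈ range (n + 1), q ^ j) (n : ℕ) :
    ∑ σ, q ^ s n σ = ∏ i ∈ range n, ∑ j ∈ range (i + 1), q ^ j := by
  induction n with
  | zero => rw [Fintype.sum_unique, Subsingleton.elim default 1, h₀, pow_zero, prod_range_zero]
  | succ n ih =>
    rw [← Fintype.sum_bijective _ insertMax_bijective _ _ fun _ => rfl, Fintype.sum_prod_type,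
      Finset.sum_comm, prod_range_succ, ← ih, sum_mul]
    exact sum_congr rfl fun τ _ => hs n τ

theorem sum_pow_maj (q : R) (n : ℕ) :
    ∑ σ : Perm (Fin n), q ^ maj σ = ∏ i ∈ range n, ∑ j ∈ range (i + 1), q ^ j := by
  refine sum_pow_eq_prod_of_insertMax q (fun _ => maj) rfl (fun n τ => ?_) n
  simp only [maj_insertMax, pow_add, ← mul_sum]
  rw [Fin.sum_univ_eq_sum_range (fun p => q ^ slotLabel (Des τ) n p),
    sum_slotLabel (Des_subset_range τ)]

theorem sum_pow_inv (q : R) (n : ℕ) :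
    ∑ σ : Perm (Fin n), q ^ inv σ = ∏ i ∈ range n, ∑ j ∈ range (i + 1), q ^ j := by
  refine sum_pow_eq_prod_of_insertMax q (fun _ => inv) rfl (fun n τ => ?_) n
  simp only [inv_insertMax, pow_add, ← mul_sum]
  rw [Fin.sum_univ_eq_sum_range (fun p => q ^ (n - p)), ← sum_range_reflect (q ^ ·),
    add_tsub_cancel_right]

end Paper

/-- MacMahon: `maj` and `inv` are equidistributed on `S_n`, with common generating
function the `q`-factorial `[n]_q! = ∏_{i=1}^n (1-q^i)/(1-q)`. -/
theorem maj_inv_equidistributed (n : ℕ) :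
    (∑ σ : Equiv.Perm (Fin n), (Polynomial.X : Polynomial ℤ) ^ Paper.maj σ) =
      (∑ σ : Equiv.Perm (Fin n), (Polynomial.X : Polynomial ℤ) ^ Paper.inv σ) ∧
    (∑ σ : Equiv.Perm (Fin n), (Polynomial.X : Polynomial ℤ) ^ Paper.inv σ) =
      ∏ i ∈ Finset.range n, ∑ j ∈ Finset.range (i + 1), (Polynomial.X : Polynomial ℤ) ^ j :=
  ⟨by rw [Paper.sum_pow_maj, Paper.sum_pow_inv], Paper.sum_pow_inv _ n⟩
end

section
/- The major code is a bijection from S_n to the set of sub-diagonal sequences, and the sum of its entries equals the major index: ∑_{i=1}^n m_i(σ) = maj(σ). -/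
open Finset

/-!
The word `σ^{(i)}` is `σ^{(i+1)}` with its smallest letter `i` inserted into one of its
`n - i + 1` slots. Inserting a letter smaller than all others into slot `k` of a word `w` raises
its major index by `majGain w k`, and `majGain w` is injective with values at most `|w|`. So
`m_i = majGain σ^{(i+1)} k` is sub-diagonal and determines the slot `k` of `i`, and `σ` can be
rebuilt from its major code letter by letter, from the largest down: the code is injective, hence
bijective because there are `n!` sub-diagonal sequences. The sum of the code telescopes to
`maj σ^{(1)} = maj σ`.
-/

namespace Paper

def descents (l : List ℕ) : Finset ℕ :=
  {t ∈ range (l.length - 1) | l.getD (t + 1) 0 < l.getD t 0}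

theorem mem_descents {l : List ℕ} {t : ℕ} :
    t ∈ descents l ↔ t + 1 < l.length ∧ l.getD (t + 1) 0 < l.getD t 0 := by
  rw [descents, mem_filter, mem_range]
  omega

theorem majL_nil : majL [] = 0 := rfl

theorem majL_eq_sum_descents (l : List ℕ) : majL l = ∑ t ∈ descents l, (t + 1) := by
  rw [majL, descents, sum_filter]

theorem descents_subset_range (l : List ℕ) : descents l ⊆ range (l.length - 1) :=
  filter_subset _ _

/-- The gain of `majL` when a letter smaller than all letters of `w` is inserted before `w[k]`
(`majL_insert`). As a labelling of the slots `0, …, w.length`, the slots right after a descent get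
`#(descents w) - 1, …, 0` and the others `#(descents w), …, w.length`, each from left to right. -/
def majGain (w : List ℕ) (k : ℕ) : ℕ :=
  if 0 < k ∧ k - 1 ∈ descents w then #{t ∈ descents w | k ≤ t}
  else #(descents w) + #(range k \ descents w)

theorem add_card_filter_le_eq (D : Finset ℕ) (k : ℕ) :
    k + #{t ∈ D | k ≤ t} = #D + #(range k \ D) := by
  have hD := card_filter_add_card_filter_not (s := D) (k ≤ ·)
  have hk := card_sdiff_add_card_inter (range k) D
  have hDk : {t ∈ D | ¬k ≤ t} = range k ∩ D := by
    ext t; simp only [mem_filter, mem_inter, mem_range, not_le]; tauto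
  rw [card_range, ← hDk] at hk
  omega

theorem majGain_lt_card_descents {w : List ℕ} {k : ℕ} (hk : 0 < k ∧ k - 1 ∈ descents w) :
    majGain w k < #(descents w) := by
  rw [majGain, if_pos hk]
  exact card_lt_card ⟨filter_subset _ _, fun h => by have := (mem_filter.1 (h hk.2)).2; omega⟩

theorem card_descents_le_majGain {w : List ℕ} {k : ℕ} (hk : ¬(0 < k ∧ k - 1 ∈ descents w)) :
    #(descents w) ≤ majGain w k := by
  rw [majGain, if_neg hk]
  exact Nat.le_add_right _ _

theorem majGain_injective (w : List ℕ) : Function.Injective (majGain w) := by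
  refine .of_lt_imp_ne fun k k' hkk' => ?_
  by_cases hk : 0 < k ∧ k - 1 ∈ descents w <;> by_cases hk' : 0 < k' ∧ k' - 1 ∈ descents w
  · rw [majGain, majGain, if_pos hk, if_pos hk']
    refine (card_lt_card ⟨fun t ht => ?_, fun h => ?_⟩).ne'
    · rw [mem_filter] at ht ⊢; exact ⟨ht.1, by omega⟩
    · have := (mem_filter.1 (h (mem_filter.2 ⟨hk'.2, by omega⟩))).2; omega
  · exact (majGain_lt_card_descents hk).trans_le (card_descents_le_majGain hk') |>.ne
  · exact (majGain_lt_card_descents hk').trans_le (card_descents_le_majGain hk) |>.ne'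
  · rw [majGain, majGain, if_neg hk, if_neg hk']
    have hk'1 : k' - 1 ∈ range k' \ descents w :=
      mem_sdiff.2 ⟨mem_range.2 (by omega), fun h => hk' ⟨by omega, h⟩⟩
    refine (Nat.add_lt_add_left (card_lt_card ⟨sdiff_subset_sdiff ?_ subset_rfl, ?_⟩) _).ne
    · exact range_subset_range.2 hkk'.le
    · exact fun h => by have := mem_range.1 (mem_sdiff.1 (h hk'1)).1; omega

theorem majGain_le {w : List ℕ} {k : ℕ} (hk : k ≤ w.length) : majGain w k ≤ w.length := by
  by_cases hdes : 0 < k ∧ k - 1 ∈ descents w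
  · exact (majGain_lt_card_descents hdes).le.trans
      ((card_le_card (descents_subset_range w)).trans (by simp))
  · rw [majGain, if_neg hdes, add_comm, card_sdiff_add_card]
    calc #(range k ∪ descents w) ≤ #(range w.length) :=
          card_le_card (union_subset (range_subset_range.2 hk)
            ((descents_subset_range w).trans (range_subset_range.2 (Nat.sub_le _ _))))
      _ = w.length := card_range _

section Insert

variable {l₁ l₂ : List ℕ} {a : ℕ}

theorem getD_insert_of_lt {t : ℕ} (ht : t < l₁.length) :
    (l₁ ++ a :: l₂).getD t 0 = (l₁ ++ l₂).getD t 0 := by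
  rw [List.getD_append _ _ _ _ ht, List.getD_append _ _ _ _ ht]

theorem getD_insert_length : (l₁ ++ a :: l₂).getD l₁.length 0 = a := by
  rw [List.getD_append_right _ _ _ _ le_rfl, Nat.sub_self, List.getD_cons_zero]

theorem getD_insert_succ_of_le {t : ℕ} (ht : l₁.length ≤ t) :
    (l₁ ++ a :: l₂).getD (t + 1) 0 = (l₁ ++ l₂).getD t 0 := by
  rw [List.getD_append_right _ _ _ _ (by omega), List.getD_append_right _ _ _ _ ht,
    Nat.sub_add_comm ht, List.getD_cons_succ]

theorem mem_descents_insert (ha : ∀ x ∈ l₁ ++ l₂, a < x) {t : ℕ} :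
    t ∈ descents (l₁ ++ a :: l₂) ↔ t + 1 = l₁.length ∨
      (t + 1 < l₁.length ∧ t ∈ descents (l₁ ++ l₂)) ∨
      (l₁.length < t ∧ t - 1 ∈ descents (l₁ ++ l₂)) := by
  have hlen : (l₁ ++ a :: l₂).length = (l₁ ++ l₂).length + 1 := by simp; omega
  have hk : l₁.length ≤ (l₁ ++ l₂).length := by simp
  have ha' : ∀ s < (l₁ ++ l₂).length, a < (l₁ ++ l₂).getD s 0 := fun s hs => by
    rw [List.getD_eq_getElem _ _ hs]; exact ha _ (List.getElem_mem hs)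
  simp only [mem_descents, hlen]
  rcases lt_trichotomy t l₁.length with ht | rfl | ht
  · rw [getD_insert_of_lt ht]
    rcases Nat.lt_or_eq_of_le (show t + 1 ≤ l₁.length by omega) with ht' | ht'
    · rw [getD_insert_of_lt ht']; omega
    · have hu : (l₁ ++ a :: l₂).getD (t + 1) 0 = a := by rw [ht', getD_insert_length]
      have := ha' t (by omega)
      rw [hu]; omega
  · rw [getD_insert_length, getD_insert_succ_of_le le_rfl]
    have := ha' l₁.length
    omega
  · obtain ⟨s, rfl⟩ : ∃ s, t = s + 1 := ⟨t - 1, by omega⟩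
    rw [getD_insert_succ_of_le (by omega), getD_insert_succ_of_le (by omega), Nat.add_sub_cancel]
    omega

theorem sum_descents_insert_of_le (ha : ∀ x ∈ l₁ ++ l₂, a < x) :
    ∑ t ∈ descents (l₁ ++ a :: l₂) with l₁.length ≤ t, (t + 1) =
      ∑ t ∈ descents (l₁ ++ l₂) with l₁.length ≤ t, (t + 1) +
        #{t ∈ descents (l₁ ++ l₂) | l₁.length ≤ t} := by
  have hmap : {t ∈ descents (l₁ ++ a :: l₂) | l₁.length ≤ t} =
      {t ∈ descents (l₁ ++ l₂) | l₁.length ≤ t}.map (addRightEmbedding 1) := by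
    ext t
    simp only [mem_filter, mem_descents_insert ha, mem_map, addRightEmbedding_apply]
    constructor
    · rintro ⟨h | h | h, ht⟩
      · omega
      · omega
      · exact ⟨t - 1, ⟨h.2, by omega⟩, by omega⟩
    · rintro ⟨s, ⟨hs, hks⟩, rfl⟩
      exact ⟨.inr (.inr ⟨by omega, by simpa using hs⟩), by omega⟩
  rw [hmap, sum_map, card_eq_sum_ones, ← sum_add_distrib]
  rfl

theorem sum_descents_insert_of_lt (ha : ∀ x ∈ l₁ ++ l₂, a < x) :
    ∑ t ∈ descents (l₁ ++ a :: l₂) with ¬l₁.length ≤ t, (t + 1) =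
      ∑ t ∈ descents (l₁ ++ l₂) with ¬l₁.length ≤ t, (t + 1) +
        if 0 < l₁.length ∧ l₁.length - 1 ∈ descents (l₁ ++ l₂) then 0 else l₁.length := by
  have hmem : ∀ t, t ∈ descents (l₁ ++ a :: l₂) ∧ ¬l₁.length ≤ t ↔
      t + 1 = l₁.length ∨ t ∈ descents (l₁ ++ l₂) ∧ ¬l₁.length ≤ t := fun t => by
    rw [mem_descents_insert ha]
    constructor
    · rintro ⟨h | h | h, ht⟩
      · exact .inl h
      · exact .inr ⟨h.2, ht⟩
      · omega
    · rintro (h | h)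
      · exact ⟨.inl h, by omega⟩
      · by_cases ht : t + 1 = l₁.length
        · exact ⟨.inl ht, h.2⟩
        · exact ⟨.inr (.inl ⟨by omega, h.1⟩), h.2⟩
  split_ifs with hdes
  · rw [add_zero]
    congr 1
    ext t
    rw [mem_filter, mem_filter, hmem]
    refine or_iff_right_of_imp fun ht => ⟨?_, by omega⟩
    simpa [show t = l₁.length - 1 by omega] using hdes.2
  · rcases Nat.eq_zero_or_pos l₁.length with hk | hk
    · simp [hk]
    have hins : {t ∈ descents (l₁ ++ a :: l₂) | ¬l₁.length ≤ t} =
        insert (l₁.length - 1) {t ∈ descents (l₁ ++ l₂) | ¬l₁.length ≤ t} := by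
      ext t
      rw [mem_insert, mem_filter, mem_filter, hmem, eq_tsub_iff_add_eq_of_le hk]
    rw [hins, sum_insert fun h => hdes ⟨hk, (mem_filter.1 h).1⟩, Nat.sub_add_cancel hk, add_comm]

theorem majL_insert (ha : ∀ x ∈ l₁ ++ l₂, a < x) :
    majL (l₁ ++ a :: l₂) = majL (l₁ ++ l₂) + majGain (l₁ ++ l₂) l₁.length := by
  rw [majL_eq_sum_descents, majL_eq_sum_descents,
    ← sum_filter_add_sum_filter_not _ (l₁.length ≤ ·),
    ← sum_filter_add_sum_filter_not (descents (l₁ ++ l₂)) (l₁.length ≤ ·),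
    sum_descents_insert_of_le ha, sum_descents_insert_of_lt ha, majGain]
  split_ifs with hdes
  · ring
  · have := add_card_filter_le_eq (descents (l₁ ++ l₂)) l₁.length
    omega

end Insert

theorem exists_filter_le_eq_append_cons {l : List ℕ} (hl : l.Nodup) {a : ℕ} (ha : a ∈ l) :
    ∃ l₁ l₂, (∀ x ∈ l₁ ++ l₂, a < x) ∧ l.filter (fun x => decide (a + 1 ≤ x)) = l₁ ++ l₂ ∧
      l.filter (fun x => decide (a ≤ x)) = l₁ ++ a :: l₂ := by
  obtain ⟨s, t, rfl⟩ := List.append_of_mem ha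
  have hst : a ∉ s ++ t := (List.nodup_cons.1 (List.nodup_middle.1 hl)).1
  have hsucc : ∀ u : List ℕ, a ∉ u →
      u.filter (fun x => decide (a ≤ x)) = u.filter (fun x => decide (a + 1 ≤ x)) :=
    fun u hu => List.filter_congr fun x hx => by
      have : x ≠ a := fun h => hu (h ▸ hx)
      simp only [decide_eq_decide]; omega
  refine ⟨s.filter (fun x => decide (a + 1 ≤ x)), t.filter (fun x => decide (a + 1 ≤ x)),
    fun x hx => ?_, ?_, ?_⟩
  · rw [← List.filter_append, List.mem_filter, decide_eq_true_eq] at hx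
    exact hx.2
  · rw [List.filter_append, List.filter_cons_of_neg (by simp)]
  · rw [List.filter_append, List.filter_cons_of_pos (by simp),
      hsucc s fun h => hst (List.mem_append_left t h),
      hsucc t fun h => hst (List.mem_append_right s h)]

section Perm

variable {n : ℕ}

theorem mem_word {σ : Equiv.Perm (Fin n)} {x : ℕ} : x ∈ word σ ↔ 0 < x ∧ x ≤ n := by
  rw [word, List.mem_ofFn]
  constructor
  · rintro ⟨i, rfl⟩
    exact ⟨Nat.succ_pos _, (σ i).isLt⟩
  · rintro ⟨h0, hn⟩
    exact ⟨σ.symm ⟨x - 1, by omega⟩, by simp; omega⟩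

theorem length_word (σ : Equiv.Perm (Fin n)) : (word σ).length = n := List.length_ofFn

theorem getD_word (σ : Equiv.Perm (Fin n)) {t : ℕ} (ht : t < n) :
    (word σ).getD t 0 = wrd σ t + 1 := by
  rw [List.getD_eq_getElem _ _ (by rwa [length_word])]
  simp [word, wrd, ht]

theorem word_nodup (σ : Equiv.Perm (Fin n)) : (word σ).Nodup :=
  List.nodup_ofFn.2 fun _ _ h => σ.injective (Fin.ext (Nat.succ_injective h))

theorem word_injective : Function.Injective (word : Equiv.Perm (Fin n) → List ℕ) :=
  fun _ _ h => Equiv.ext fun i =>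
    Fin.ext (Nat.succ_injective (congrFun (List.ofFn_inj.1 h) i))

theorem Des_eq_map_descents (σ : Equiv.Perm (Fin n)) :
    Des σ = (descents (word σ)).map (addRightEmbedding 1) := by
  ext i
  simp only [Des, mem_filter, mem_Ioo, mem_map, mem_descents, addRightEmbedding_apply,
    length_word]
  constructor
  · rintro ⟨⟨h0, hn⟩, hlt⟩
    refine ⟨i - 1, ⟨by omega, ?_⟩, by omega⟩
    rw [Nat.sub_add_cancel h0, getD_word σ hn, getD_word σ (by omega)]
    omega
  · rintro ⟨t, ⟨ht, hlt⟩, rfl⟩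
    rw [getD_word σ ht, getD_word σ (by omega)] at hlt
    exact ⟨⟨by omega, ht⟩, by simpa using hlt⟩

theorem majL_word (σ : Equiv.Perm (Fin n)) : majL (word σ) = maj σ := by
  rw [majL_eq_sum_descents, maj, Des_eq_map_descents, sum_map]
  rfl

/-- The paper's `σ^{(i+1)}` (the letters of `word σ` are 1-based). -/
def wordAbove (σ : Equiv.Perm (Fin n)) (i : ℕ) : List ℕ :=
  (word σ).filter fun x => decide (i + 1 ≤ x)

theorem wordAbove_zero (σ : Equiv.Perm (Fin n)) : wordAbove σ 0 = word σ :=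
  List.filter_eq_self.2 fun _ hx => decide_eq_true (mem_word.1 hx).1

theorem length_wordAbove (σ : Equiv.Perm (Fin n)) (i : ℕ) : (wordAbove σ i).length = n - i := by
  have hset : (wordAbove σ i).toFinset = Icc (i + 1) n := by
    ext x
    simp only [wordAbove, List.mem_toFinset, List.mem_filter, mem_word, mem_Icc,
      decide_eq_true_eq]
    omega
  rw [← List.toFinset_card_of_nodup (l := wordAbove σ i) ((word_nodup σ).filter _), hset,
    Nat.card_Icc]
  omega

theorem wordAbove_of_le (σ : Equiv.Perm (Fin n)) {i : ℕ} (hi : n ≤ i) : wordAbove σ i = [] :=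
  List.eq_nil_of_length_eq_zero (by rw [length_wordAbove]; omega)

theorem exists_wordAbove_eq_append_cons (σ : Equiv.Perm (Fin n)) {i : ℕ} (hi : i < n) :
    ∃ l₁ l₂, (∀ x ∈ l₁ ++ l₂, i + 1 < x) ∧ wordAbove σ (i + 1) = l₁ ++ l₂ ∧
      wordAbove σ i = l₁ ++ (i + 1) :: l₂ :=
  exists_filter_le_eq_append_cons (word_nodup σ) (mem_word.2 ⟨by omega, hi⟩)

theorem Mc_eq_majGain (σ : Equiv.Perm (Fin n)) {i : ℕ} {l₁ l₂ : List ℕ}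
    (hgt : ∀ x ∈ l₁ ++ l₂, i + 1 < x) (hsucc : wordAbove σ (i + 1) = l₁ ++ l₂)
    (hi : wordAbove σ i = l₁ ++ (i + 1) :: l₂) : Mc σ i = majGain (l₁ ++ l₂) l₁.length := by
  show majL (wordAbove σ i) - majL (wordAbove σ (i + 1)) = _
  rw [hsucc, hi, majL_insert hgt]
  omega

theorem Mc_eq_zero_of_le (σ : Equiv.Perm (Fin n)) {i : ℕ} (hi : n ≤ i) : Mc σ i = 0 := by
  show majL (wordAbove σ i) - majL (wordAbove σ (i + 1)) = 0
  rw [wordAbove_of_le σ hi, wordAbove_of_le σ (by omega), Nat.sub_self]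

theorem Mc_add_majL_wordAbove_succ (σ : Equiv.Perm (Fin n)) (i : ℕ) :
    Mc σ i + majL (wordAbove σ (i + 1)) = majL (wordAbove σ i) := by
  rcases lt_or_ge i n with hi | hi
  · obtain ⟨l₁, l₂, hgt, hsucc, hi⟩ := exists_wordAbove_eq_append_cons σ hi
    rw [Mc_eq_majGain σ hgt hsucc hi, hsucc, hi, majL_insert hgt, add_comm]
  · rw [Mc_eq_zero_of_le σ hi, zero_add, wordAbove_of_le σ hi, wordAbove_of_le σ (by omega)]

theorem Mc_add_lt (σ : Equiv.Perm (Fin n)) {i : ℕ} (hi : i < n) : Mc σ i + i < n := by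
  obtain ⟨l₁, l₂, hgt, hsucc, hi'⟩ := exists_wordAbove_eq_append_cons σ hi
  have hlen : (l₁ ++ l₂).length = n - (i + 1) := hsucc ▸ length_wordAbove σ (i + 1)
  have := majGain_le (w := l₁ ++ l₂) (k := l₁.length) (by simp)
  rw [Mc_eq_majGain σ hgt hsucc hi']
  omega

theorem Mc_mem_subDiag (σ : Equiv.Perm (Fin n)) : Mc σ ∈ SubDiag n :=
  ⟨fun _ hi => Mc_add_lt σ hi, fun _ hi => Mc_eq_zero_of_le σ hi⟩

theorem Mc_injective : Function.Injective (Mc : Equiv.Perm (Fin n) → ℕ → ℕ) := by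
  intro σ τ h
  have hwords : ∀ i ≤ n, wordAbove σ i = wordAbove τ i := fun i hi => by
    induction hi using Nat.decreasingInduction with
    | self => rw [wordAbove_of_le σ le_rfl, wordAbove_of_le τ le_rfl]
    | of_succ i hi ih =>
      obtain ⟨l₁, l₂, hgt, hsucc, hσ⟩ := exists_wordAbove_eq_append_cons σ hi
      obtain ⟨l₁', l₂', hgt', hsucc', hτ⟩ := exists_wordAbove_eq_append_cons τ hi
      have hw : l₁ ++ l₂ = l₁' ++ l₂' := hsucc.symm.trans (ih.trans hsucc')
      have hlen : l₁.length = l₁'.length := majGain_injective (l₁ ++ l₂) <| by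
        rw [← Mc_eq_majGain σ hgt hsucc hσ, congrFun h i, Mc_eq_majGain τ hgt' hsucc' hτ, hw]
      obtain ⟨rfl, rfl⟩ := List.append_inj hw hlen
      rw [hσ, hτ]
  exact word_injective (by rw [← wordAbove_zero, ← wordAbove_zero, hwords 0 (Nat.zero_le n)])

theorem sum_range_Mc_add_majL_wordAbove (σ : Equiv.Perm (Fin n)) (m : ℕ) :
    ∑ i ∈ range m, Mc σ i + majL (wordAbove σ m) = majL (word σ) := by
  induction m with
  | zero => rw [sum_range_zero, zero_add, wordAbove_zero]
  | succ m ih => rw [sum_range_succ, add_assoc, Mc_add_majL_wordAbove_succ, ih]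

theorem sum_range_Mc (σ : Equiv.Perm (Fin n)) : ∑ i ∈ range n, Mc σ i = maj σ := by
  have := sum_range_Mc_add_majL_wordAbove σ n
  rwa [wordAbove_of_le σ le_rfl, majL_nil, add_zero, majL_word] at this

end Perm

section SubDiag

variable {n : ℕ}

def extendByZero (c : (i : Fin n) → Fin (n - i)) (i : ℕ) : ℕ :=
  if h : i < n then c ⟨i, h⟩ else 0

theorem extendByZero_injective : Function.Injective (extendByZero (n := n)) := fun c d h =>
  funext fun i => Fin.ext <| by simpa [extendByZero] using congrFun h i

theorem range_extendByZero : Set.range (extendByZero (n := n)) = SubDiag n := by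
  ext c
  constructor
  · rintro ⟨c, rfl⟩
    refine ⟨fun i hi => ?_, fun i hi => ?_⟩
    · have : (c ⟨i, hi⟩ : ℕ) < n - i := (c ⟨i, hi⟩).isLt
      simp only [extendByZero, dif_pos hi]
      omega
    · simp only [extendByZero, dif_neg (not_lt.2 hi)]
  · rintro ⟨hlt, hzero⟩
    refine ⟨fun i => ⟨c i, by have := hlt i i.isLt; omega⟩, funext fun i => ?_⟩
    by_cases hi : i < n
    · simp [extendByZero, hi]
    · simp [extendByZero, hi, hzero i (not_lt.1 hi)]

theorem finite_subDiag : (SubDiag n).Finite :=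
  range_extendByZero ▸ Set.finite_range _

theorem ncard_subDiag : (SubDiag n).ncard = n.factorial := by
  rw [← range_extendByZero, Set.ncard_range_of_injective extendByZero_injective, Nat.card_pi]
  simp only [Nat.card_eq_fintype_card, Fintype.card_fin]
  rw [Fin.prod_univ_eq_prod_range (fun i => n - i), ← Nat.descFactorial_eq_prod_range,
    Nat.descFactorial_self]

end SubDiag

end Paper

/-- The major code is a bijection from `S_n` onto the set of sub-diagonal sequences, and
the sum of its entries is the major index. -/
theorem major_code_bijective_and_sum (n : ℕ) :
    Set.BijOn (fun σ : Equiv.Perm (Fin n) => Paper.Mc σ) Set.univ (Paper.SubDiag n) ∧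
    ∀ σ : Equiv.Perm (Fin n), ∑ i ∈ Finset.range n, Paper.Mc σ i = Paper.maj σ := by
  have hmaps : Set.MapsTo (fun σ : Equiv.Perm (Fin n) => Paper.Mc σ) Set.univ (Paper.SubDiag n) :=
    fun σ _ => Paper.Mc_mem_subDiag σ
  refine ⟨⟨hmaps, Paper.Mc_injective.injOn, ?_⟩, Paper.sum_range_Mc⟩
  have hcard : (Paper.SubDiag n).ncard ≤
      ((fun σ : Equiv.Perm (Fin n) => Paper.Mc σ) '' Set.univ).ncard := by
    rw [Paper.ncard_subDiag, Set.ncard_image_of_injective _ Paper.Mc_injective, Set.ncard_univ,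
      Nat.card_perm, Nat.card_fin]
  exact (Set.eq_of_subset_of_ncard_le hmaps.image_subset hcard Paper.finite_subDiag).symm.subset
end

section
/- Flagged product formula for inverse saillance codes: for a composition I = (i_1,...,i_r) of n, the sum over all permutations σ whose descent set is contained in Des(I) of ∏_j x_{s_j(σ^{-1})} (where (s_j) is the saillance code) equals h_{i_1}(X_{i_2+⋯+i_r}) · h_{i_2}(X_{i_3+⋯+i_r}) ⋯ h_{i_{r-1}}(X_{i_r}) · h_{i_r}(X_0). -/
open Finset

/-!
Induct on the composition. Write `I = a :: J` and `m = J.sum`. A permutation `σ` of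
`{0, …, a + m - 1}` with `Des σ ⊆ Des I` increases on its first `a` positions, so it is
determined by the weakly increasing code `f i = σ i - i ∈ {0, …, m}` of that head together
with the standardization `σ'` of its last `m` letters, and `Des σ' ⊆ Des J`; every such pair
`(f, σ')` occurs. At a tail position the saillance code of `σ⁻¹` is that of `σ'⁻¹`, while at
head position `i` it is `g (f i)` for a bijection `g` of `{0, …, m}` depending on `σ'` only.
Summing over `f` therefore gives `h_a(x_{g 0}, …, x_{g m}) = h_a(X_m)`, times the sum for `J`.
-/

namespace Paper

open Equiv Function

section Counting

lemma card_filter_perm_val_lt {m c : ℕ} (τ : Perm (Fin m)) (hc : c ≤ m) :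
    #{k | (τ k : ℕ) < c} = c := by
  rw [← card_map τ.toEmbedding, map_filter, univ_map_equiv_to_embedding]
  simpa [Function.comp_def, hc] using Fin.card_filter_val_lt (n := m) (m := c)

lemma card_filter_apply_lt {n : ℕ} (σ : Perm (Fin n)) (x : Fin n) :
    #{q | σ q < σ x} = σ x := by
  simpa only [Fin.lt_def] using card_filter_perm_val_lt σ (σ x).isLt.le

lemma _root_.Equiv.Perm.eq_of_lt_iff {n : ℕ} {σ τ : Perm (Fin n)} (h : ∀ j k, σ j < σ k ↔ τ j < τ k) :
    σ = τ :=
  Equiv.ext fun k => Fin.ext <| by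
    rw [← card_filter_apply_lt σ k, ← card_filter_apply_lt τ k]
    simp only [h]

lemma val_apply_eq_card_add_card {a m : ℕ} (σ : Perm (Fin (a + m))) (x : Fin (a + m)) :
    (σ x : ℕ) =
      #{i : Fin a | σ (Fin.castAdd m i) < σ x} + #{k : Fin m | σ (Fin.natAdd a k) < σ x} := by
  rw [← card_filter_apply_lt σ x]
  simp only [card_filter]
  exact Fin.sum_univ_add _

lemma card_filter_lt_le_card_filter_lt_iff {ι β : Type*} [Fintype ι] [LinearOrder β]
    (g : ι → β) (u : β) (k : ι) : #{j | g j < u} ≤ #{j | g j < g k} ↔ u ≤ g k := by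
  classical
  refine ⟨fun h => not_lt.1 fun hku => ?_, fun h => card_le_card fun j hj => ?_⟩
  · have hsub : insert k ({j | g j < g k} : Finset ι) ⊆ ({j | g j < u} : Finset ι) := by
      intro j hj
      rcases mem_insert.1 hj with rfl | hj
      · simpa using hku
      · simpa using (mem_filter.1 hj).2.trans hku
    have := card_le_card hsub
    rw [card_insert_of_notMem (by simp)] at this
    omega
  · simp only [mem_filter, mem_univ, true_and] at hj ⊢
    exact hj.trans_le h

lemma _root_.Fin.castAdd_lt_natAdd {a m : ℕ} (i : Fin a) (k : Fin m) :
    Fin.castAdd m i < Fin.natAdd a k :=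
  Fin.lt_def.2 (by simp only [Fin.val_castAdd, Fin.val_natAdd]; omega)

end Counting

lemma _root_.Tuple.sort_inv_lt_sort_inv_iff {m : ℕ} {β : Type*} [LinearOrder β] {g : Fin m → β}
    (hg : Injective g) (j k : Fin m) :
    (Tuple.sort g)⁻¹ j < (Tuple.sort g)⁻¹ k ↔ g j < g k := by
  have hmono : StrictMono (g ∘ Tuple.sort g) :=
    (Tuple.monotone_sort g).strictMono_of_injective (hg.comp (Tuple.sort g).injective)
  simpa [Perm.inv_def] using
    (hmono.lt_iff_lt (a := (Tuple.sort g)⁻¹ j) (b := (Tuple.sort g)⁻¹ k)).symm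

lemma sum_monotone_prod_comp_perm {k : ℕ} {α R : Type*} [Fintype α] [LinearOrder α]
    [CommSemiring R] (w : α → R) (g : Perm α) :
    ∑ f ∈ univ.filter (fun f : Fin k → α => ∀ a b : Fin k, a ≤ b → f a ≤ f b),
        ∏ t, w (g (f t)) =
      ∑ f ∈ univ.filter (fun f : Fin k → α => ∀ a b : Fin k, a ≤ b → f a ≤ f b),
        ∏ t, w (f t) := by
  have sort_of_mono {f : Fin k → α} (hf : f ∈ univ.filter fun f : Fin k → α =>
      ∀ a b : Fin k, a ≤ b → f a ≤ f b) (s : Perm (Fin k)) : (f ∘ s) ∘ Tuple.sort (f ∘ s) = f := by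
    rw [Tuple.comp_perm_comp_sort_eq_comp_sort,
      Tuple.sort_eq_refl_iff_monotone.2 fun a b hab => (mem_filter.1 hf).2 a b hab]
    rfl
  refine sum_nbij' (fun f => (g ∘ f) ∘ Tuple.sort (g ∘ f))
    (fun f => (g.symm ∘ f) ∘ Tuple.sort (g.symm ∘ f)) ?_ ?_ ?_ ?_ ?_
  · exact fun f _ => by simpa using fun a b hab => Tuple.monotone_sort (g ∘ f) hab
  · exact fun f _ => by simpa using fun a b hab => Tuple.monotone_sort (g.symm ∘ f) hab
  · intro f hf
    have hcancel (s : Perm (Fin k)) : g.symm ∘ ((g ∘ f) ∘ s) = f ∘ s := by ext; simp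
    simp only [hcancel, sort_of_mono hf]
  · intro f hf
    have hcancel (s : Perm (Fin k)) : g ∘ ((g.symm ∘ f) ∘ s) = f ∘ s := by ext; simp
    simp only [hcancel, sort_of_mono hf]
  · intro f _
    exact (Equiv.prod_comp (Tuple.sort (g ∘ f)) fun t => w (g (f t))).symm

section Merge

variable {a m : ℕ}

/-- The value that `merge f σ'` gives to the tail letter of rank `v`: the `v`-th smallest
element of the complement of the head values `{f i + i}`. -/
def liftVal (f : Fin a → Fin (m + 1)) (v : ℕ) : ℕ := v + #{i | (f i : ℕ) ≤ v}

lemma liftVal_strictMono (f : Fin a → Fin (m + 1)) : StrictMono (liftVal f) := by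
  intro v w hvw
  have : #{i | (f i : ℕ) ≤ v} ≤ #{i | (f i : ℕ) ≤ w} :=
    card_le_card fun i hi => by simp only [mem_filter, mem_univ, true_and] at hi ⊢; omega
  unfold liftVal
  omega

lemma liftVal_lt (f : Fin a → Fin (m + 1)) {v : ℕ} (hv : v < m) : liftVal f v < a + m := by
  have := card_filter_le (univ : Finset (Fin a)) fun i => (f i : ℕ) ≤ v
  rw [card_fin] at this
  unfold liftVal
  omega

variable {f : Fin a → Fin (m + 1)}

lemma liftVal_lt_of_lt (hf : Monotone f) {i : Fin a} {v : ℕ} (hv : v < f i) :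
    liftVal f v < f i + i := by
  have : #{i' | (f i' : ℕ) ≤ v} ≤ #{i' : Fin a | (i' : ℕ) < i} := card_le_card fun i' hi' => by
    simp only [mem_filter, mem_univ, true_and] at hi' ⊢
    by_contra! h
    have := Fin.le_def.1 (hf (Fin.le_def.2 h))
    omega
  rw [Fin.card_filter_val_lt, min_eq_right i.isLt.le] at this
  unfold liftVal
  omega

lemma lt_liftVal_of_le (hf : Monotone f) {i : Fin a} {v : ℕ} (hv : (f i : ℕ) ≤ v) :
    (f i : ℕ) + i < liftVal f v := by
  have : #{i' : Fin a | (i' : ℕ) < i + 1} ≤ #{i' | (f i' : ℕ) ≤ v} := card_le_card fun i' hi' => by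
    simp only [mem_filter, mem_univ, true_and] at hi' ⊢
    exact (Fin.le_def.1 (hf (Fin.le_def.2 (by omega)))).trans hv
  rw [Fin.card_filter_val_lt, min_eq_right i.isLt] at this
  unfold liftVal
  omega

lemma liftVal_lt_iff (hf : Monotone f) (i : Fin a) (v : ℕ) :
    liftVal f v < f i + i ↔ v < f i :=
  ⟨fun h => not_le.1 fun hv => (lt_liftVal_of_le hf hv).not_gt h, liftVal_lt_of_lt hf⟩

def mergeFun (f : Fin a → Fin (m + 1)) (σ' : Perm (Fin m)) : Fin (a + m) → Fin (a + m) :=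
  Fin.addCases (fun i => ⟨f i + i, by have := (f i).isLt; omega⟩)
    (fun k => ⟨liftVal f (σ' k), liftVal_lt f (σ' k).isLt⟩)

lemma mergeFun_injective (hf : Monotone f) (σ' : Perm (Fin m)) : Injective (mergeFun f σ') := by
  have head_strictMono : StrictMono fun i : Fin a => (f i : ℕ) + i := fun i j hij => by
    show (f i : ℕ) + i < f j + j
    have := Fin.le_def.1 (hf hij.le)
    rw [Fin.lt_def] at hij
    omega
  have head_ne_tail (i : Fin a) (k : Fin m) : (f i : ℕ) + i ≠ liftVal f (σ' k) := by
    rcases lt_or_ge (σ' k : ℕ) (f i) with h | h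
    · exact (liftVal_lt_of_lt hf h).ne'
    · exact (lt_liftVal_of_le hf h).ne
  intro p q hpq
  induction p using Fin.addCases <;> induction q using Fin.addCases <;>
    simp only [mergeFun, Fin.addCases_left, Fin.addCases_right, Fin.mk.injEq] at hpq
  · rw [head_strictMono.injective hpq]
  · exact absurd hpq (head_ne_tail _ _)
  · exact absurd hpq.symm (head_ne_tail _ _)
  · rw [σ'.injective (Fin.ext ((liftVal_strictMono f).injective hpq))]

noncomputable def merge (f : Fin a → Fin (m + 1)) (σ' : Perm (Fin m)) (hf : Monotone f) :
    Perm (Fin (a + m)) :=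
  ofBijective _ (mergeFun_injective hf σ').bijective_of_finite

variable (hf : Monotone f) (σ' : Perm (Fin m))

@[simp]
lemma merge_castAdd (i : Fin a) : (merge f σ' hf (Fin.castAdd m i) : ℕ) = f i + i := by
  simp [merge, mergeFun]

@[simp]
lemma merge_natAdd (k : Fin m) : (merge f σ' hf (Fin.natAdd a k) : ℕ) = liftVal f (σ' k) := by
  simp [merge, mergeFun]

lemma strictMono_merge_comp_castAdd : StrictMono (merge f σ' hf ∘ Fin.castAdd m) := fun i j hij => by
  have := Fin.le_def.1 (hf hij.le)
  rw [Fin.lt_def] at hij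
  simp only [comp_apply, Fin.lt_def, merge_castAdd]
  omega

lemma merge_natAdd_lt_merge_natAdd_iff (j k : Fin m) :
    merge f σ' hf (Fin.natAdd a j) < merge f σ' hf (Fin.natAdd a k) ↔ σ' j < σ' k := by
  rw [Fin.lt_def, merge_natAdd, merge_natAdd, (liftVal_strictMono f).lt_iff_lt, Fin.lt_def]

end Merge

section Decompose

variable {a m : ℕ} (σ : Perm (Fin (a + m)))

def headCode (i : Fin a) : Fin (m + 1) :=
  ⟨#{k | σ (Fin.natAdd a k) < σ (Fin.castAdd m i)},
    Nat.lt_succ_of_le <| (card_filter_le _ _).trans_eq (card_fin m)⟩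

def tailStd : Perm (Fin m) := (Tuple.sort (σ ∘ Fin.natAdd a))⁻¹

lemma tailStd_lt_tailStd_iff (j k : Fin m) :
    tailStd σ j < tailStd σ k ↔ σ (Fin.natAdd a j) < σ (Fin.natAdd a k) :=
  Tuple.sort_inv_lt_sort_inv_iff (σ.injective.comp (Fin.natAdd_injective m a)) j k

lemma val_tailStd (k : Fin m) :
    (tailStd σ k : ℕ) = #{j | σ (Fin.natAdd a j) < σ (Fin.natAdd a k)} := by
  simp only [← tailStd_lt_tailStd_iff]
  exact (card_filter_apply_lt _ k).symm

variable {σ}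

lemma monotone_headCode (hσ : StrictMono (σ ∘ Fin.castAdd m)) : Monotone (headCode σ) :=
  fun i j hij => by
    simp only [headCode, Fin.mk_le_mk]
    refine card_le_card fun k hk => ?_
    simp only [mem_filter, mem_univ, true_and] at hk ⊢
    exact hk.trans_le (hσ.monotone hij)

lemma merge_headCode_tailStd (hσ : StrictMono (σ ∘ Fin.castAdd m)) :
    merge (headCode σ) (tailStd σ) (monotone_headCode hσ) = σ := by
  ext x
  induction x using Fin.addCases with
  | left i =>
    rw [merge_castAdd, val_apply_eq_card_add_card σ, add_comm]
    congr 1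
    simpa only [← comp_apply (f := σ), hσ.lt_iff_lt, Fin.lt_def] using
      ((Fin.card_filter_val_lt (n := a) (m := i)).trans (min_eq_right i.isLt.le)).symm
  | right k =>
    rw [merge_natAdd, val_apply_eq_card_add_card σ, liftVal, add_comm, val_tailStd]
    congr 1
    refine congrArg card (filter_congr fun i _ => ?_)
    rw [headCode, Fin.val_mk,
      card_filter_lt_le_card_filter_lt_iff (fun j => σ (Fin.natAdd a j)), le_iff_lt_or_eq,
      or_iff_left (σ.injective.ne (Fin.castAdd_lt_natAdd i k).ne)]

lemma headCode_merge {f : Fin a → Fin (m + 1)} (hf : Monotone f) (σ' : Perm (Fin m)) :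
    headCode (merge f σ' hf) = f := by
  funext i
  refine Fin.ext ?_
  simp only [headCode, Fin.lt_def, merge_castAdd, merge_natAdd, liftVal_lt_iff hf]
  exact card_filter_perm_val_lt σ' (f i).is_le

lemma tailStd_merge {f : Fin a → Fin (m + 1)} (hf : Monotone f) (σ' : Perm (Fin m)) :
    tailStd (merge f σ' hf) = σ' :=
  Perm.eq_of_lt_iff fun j k => by
    rw [tailStd_lt_tailStd_iff, merge_natAdd_lt_merge_natAdd_iff]

end Decompose

section Descents

lemma wrd_of_lt {n : ℕ} (σ : Perm (Fin n)) {x : ℕ} (hx : x < n) : wrd σ x = σ ⟨x, hx⟩ :=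
  dif_pos hx

lemma mem_Des_iff {n : ℕ} {σ : Perm (Fin n)} {x : ℕ} :
    x ∈ Des σ ↔ 0 < x ∧ x < n ∧ wrd σ x < wrd σ (x - 1) := by
  simp [Des, and_assoc]

lemma mem_DesComp_cons {a : ℕ} {J : List ℕ} {x : ℕ} :
    x ∈ DesComp (a :: J) ↔ (J ≠ [] ∧ x = a) ∨ ∃ y ∈ DesComp J, x = a + y := by
  simp only [DesComp, mem_image, mem_range, List.length_cons, Nat.add_sub_cancel]
  constructor
  · rintro ⟨_ | k, hk, rfl⟩
    · exact Or.inl ⟨by rintro rfl; simp at hk, by simp⟩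
    · exact Or.inr ⟨(J.take (k + 1)).sum, ⟨k, by omega, rfl⟩, by simp⟩
  · rintro (⟨hJ, rfl⟩ | ⟨y, ⟨k, hk, rfl⟩, rfl⟩)
    · exact ⟨0, List.length_pos_iff.2 hJ, by simp⟩
    · exact ⟨k + 1, by omega, by simp⟩

variable {a m : ℕ}

lemma strictMono_comp_castAdd_iff (σ : Perm (Fin (a + m))) :
    StrictMono (σ ∘ Fin.castAdd m) ↔ ∀ x ∈ Des σ, a ≤ x := by
  constructor
  · intro h x hx
    obtain ⟨hx0, hxn, hlt⟩ := mem_Des_iff.1 hx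
    by_contra! hxa
    rw [wrd_of_lt σ hxn, wrd_of_lt σ (by omega)] at hlt
    exact (h (show (⟨x - 1, by omega⟩ : Fin a) < ⟨x, hxa⟩ from Fin.mk_lt_mk.2 (by omega))).not_gt
      (Fin.lt_def.2 hlt)
  · intro h
    have hmono : StrictMonoOn (wrd σ) (Set.Iio a) :=
      strictMonoOn_of_lt_succ Set.ordConnected_Iio fun x _ _ hx1 => by
        rw [Order.succ_eq_add_one] at hx1 ⊢
        have hx1 : x + 1 < a := hx1
        have hrise : ¬ wrd σ (x + 1) < wrd σ x := fun hd =>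
          (h _ (mem_Des_iff.2 ⟨by omega, by omega, hd⟩)).not_gt hx1
        rw [wrd_of_lt σ (by omega), wrd_of_lt σ (by omega)] at hrise ⊢
        refine lt_of_le_of_ne (not_lt.1 hrise) fun he => ?_
        simpa using σ.injective (Fin.ext he)
    intro i j hij
    have := hmono i.isLt j.isLt hij
    rw [wrd_of_lt σ (by omega), wrd_of_lt σ (by omega)] at this
    exact Fin.lt_def.2 this

lemma natAdd_mem_Des_iff {σ : Perm (Fin (a + m))} {σ' : Perm (Fin m)}
    (h : ∀ j k, σ (Fin.natAdd a j) < σ (Fin.natAdd a k) ↔ σ' j < σ' k) {y : ℕ} (hy : 0 < y) :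
    a + y ∈ Des σ ↔ y ∈ Des σ' := by
  have key (hym : y < m) : wrd σ (a + y) < wrd σ (a + y - 1) ↔ wrd σ' y < wrd σ' (y - 1) := by
    rw [show a + y - 1 = a + (y - 1) by omega, wrd_of_lt σ' hym, wrd_of_lt σ' (by omega),
      wrd_of_lt σ (by omega), wrd_of_lt σ (by omega), ← Fin.lt_def, ← Fin.lt_def]
    exact h ⟨y, hym⟩ ⟨y - 1, by omega⟩
  rw [mem_Des_iff, mem_Des_iff]
  constructor
  · rintro ⟨-, hn, hw⟩
    exact ⟨hy, by omega, (key (by omega)).1 hw⟩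
  · rintro ⟨-, hym, hw⟩
    exact ⟨by omega, by omega, (key hym).2 hw⟩

lemma Des_merge_subset {J : List ℕ} (hJ : J.sum = m) {f : Fin a → Fin (m + 1)} (hf : Monotone f)
    {σ' : Perm (Fin m)} (hσ' : Des σ' ⊆ DesComp J) : Des (merge f σ' hf) ⊆ DesComp (a :: J) := by
  intro x hx
  have hax := (strictMono_comp_castAdd_iff _).1 (strictMono_merge_comp_castAdd hf σ') x hx
  rw [mem_DesComp_cons]
  rcases hax.eq_or_lt with rfl | hlt
  · refine Or.inl ⟨?_, rfl⟩
    rintro rfl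
    have := (mem_Des_iff.1 hx).2.1
    simp only [List.sum_nil] at hJ
    omega
  · refine Or.inr ⟨x - a, hσ' ?_, by omega⟩
    rwa [← natAdd_mem_Des_iff (merge_natAdd_lt_merge_natAdd_iff hf σ') (by omega),
      Nat.add_sub_cancel' hax]

lemma Des_tailStd_subset {J : List ℕ} {σ : Perm (Fin (a + m))} (hσ : Des σ ⊆ DesComp (a :: J)) :
    Des (tailStd σ) ⊆ DesComp J := by
  intro y hy
  have hy0 := (mem_Des_iff.1 hy).1
  have := hσ ((natAdd_mem_Des_iff (fun j k => (tailStd_lt_tailStd_iff σ j k).symm) hy0).2 hy)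
  rcases mem_DesComp_cons.1 this with ⟨-, h⟩ | ⟨z, hz, h⟩
  · omega
  · rwa [show y = z by omega]

lemma strictMono_comp_castAdd_of_Des_subset {J : List ℕ} {σ : Perm (Fin (a + m))}
    (hσ : Des σ ⊆ DesComp (a :: J)) : StrictMono (σ ∘ Fin.castAdd m) :=
  (strictMono_comp_castAdd_iff σ).2 fun x hx => by
    rcases mem_DesComp_cons.1 (hσ hx) with ⟨-, rfl⟩ | ⟨y, -, rfl⟩ <;> omega

end Descents

section Saillance

lemma Sc_inv_eq_of_isGreatest {n : ℕ} {σ : Perm (Fin n)} {i p : Fin n} (hip : i < p)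
    (hp : σ p < σ i) (hmax : ∀ q, i < q → σ q < σ i → σ q ≤ σ p) : Sc σ⁻¹ i = n - p := by
  have hmem : σ p ∈ ({j | j < σ⁻¹⁻¹ i ∧ i < σ⁻¹ j} : Finset (Fin n)) := by simp [hp, hip]
  rw [Sc, dif_pos i.isLt]
  simp only [Fin.eta]
  rw [dif_pos ⟨_, hmem⟩]
  have hmax' : ({j | j < σ⁻¹⁻¹ i ∧ i < σ⁻¹ j} : Finset (Fin n)).max' ⟨_, hmem⟩ = σ p := by
    refine le_antisymm (max'_le _ _ _ fun j hj => ?_) (le_max' _ _ hmem)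
    simp only [inv_inv, mem_filter, mem_univ, true_and] at hj
    simpa using hmax (σ⁻¹ j) hj.2 (by simpa using hj.1)
  rw [hmax']
  simp

lemma Sc_inv_eq_zero {n : ℕ} {σ : Perm (Fin n)} {i : Fin n} (h : ∀ q, i < q → ¬ σ q < σ i) :
    Sc σ⁻¹ i = 0 := by
  rw [Sc, dif_pos i.isLt]
  simp only [Fin.eta]
  rw [dif_neg]
  rintro ⟨j, hj⟩
  simp only [inv_inv, mem_filter, mem_univ, true_and] at hj
  exact h (σ⁻¹ j) hj.2 (by simpa using hj.1)

variable {a m : ℕ}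

lemma Sc_inv_natAdd {σ : Perm (Fin (a + m))} {σ' : Perm (Fin m)}
    (h : ∀ j k, σ (Fin.natAdd a j) < σ (Fin.natAdd a k) ↔ σ' j < σ' k) (k : Fin m) :
    Sc σ⁻¹ (Fin.natAdd a k) = Sc σ'⁻¹ k := by
  by_cases hex : ∃ q, k < q ∧ σ' q < σ' k
  · obtain ⟨q₀, hq₀⟩ := hex
    obtain ⟨p, hp, hmax⟩ := exists_max_image ({q | k < q ∧ σ' q < σ' k} : Finset (Fin m)) σ'
      ⟨q₀, by simpa using hq₀⟩
    simp only [mem_filter, mem_univ, true_and] at hp hmax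
    rw [Sc_inv_eq_of_isGreatest hp.1 hp.2 fun q hq hqk => hmax q ⟨hq, hqk⟩,
      Sc_inv_eq_of_isGreatest ((Fin.natAdd_lt_natAdd_iff a).2 hp.1) ((h p k).2 hp.2),
      Fin.val_natAdd]
    · omega
    intro q
    induction q using Fin.addCases with
    | left i => exact fun hq => absurd hq (Fin.castAdd_lt_natAdd i k).not_gt
    | right j =>
      intro hq hjk
      rw [h] at hjk
      rw [← not_lt, h, not_lt]
      exact hmax j ⟨(Fin.natAdd_lt_natAdd_iff a).1 hq, hjk⟩
  · simp only [not_exists, not_and, not_lt] at hex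
    rw [Sc_inv_eq_zero fun q hq => (hex q hq).not_gt, Sc_inv_eq_zero]
    intro q
    induction q using Fin.addCases with
    | left i => exact fun hq => absurd hq (Fin.castAdd_lt_natAdd i k).not_gt
    | right j => exact fun hq => by rw [h]; exact (hex j ((Fin.natAdd_lt_natAdd_iff a).1 hq)).not_gt

/-- `0 ↦ 0` and `v + 1 ↦ m - σ'⁻¹ v`: the saillance code of a head letter whose code is `v + 1`
is read off the position of the tail letter of rank `v`. -/
noncomputable def headScPerm (σ' : Perm (Fin m)) : Perm (Fin (m + 1)) :=
  Perm.decomposeFin.symm (0, Fin.revPerm * σ'⁻¹)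

lemma headScPerm_zero (σ' : Perm (Fin m)) : headScPerm σ' 0 = 0 := by
  simp [headScPerm]

lemma val_headScPerm_succ (σ' : Perm (Fin m)) (v : Fin m) :
    (headScPerm σ' v.succ : ℕ) = m - σ'⁻¹ v := by
  simp only [headScPerm, Perm.decomposeFin_symm_apply_succ, swap_self, Perm.coe_mul,
    Perm.coe_inv, comp_apply, Fin.revPerm_apply, refl_apply, Fin.val_succ, Fin.val_rev]
  omega

lemma Sc_inv_merge_castAdd {f : Fin a → Fin (m + 1)} (hf : Monotone f) (σ' : Perm (Fin m))
    (i : Fin a) : Sc (merge f σ' hf)⁻¹ (Fin.castAdd m i) = headScPerm σ' (f i) := by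
  have later_head {j : Fin a} (hij : i < j) :
      ¬ merge f σ' hf (Fin.castAdd m j) < merge f σ' hf (Fin.castAdd m i) :=
    (strictMono_merge_comp_castAdd hf σ' hij).not_gt
  cases hfi : f i using Fin.cases with
  | zero =>
    rw [headScPerm_zero, Fin.val_zero, Sc_inv_eq_zero]
    intro q
    induction q using Fin.addCases with
    | left j => exact fun hij => later_head hij
    | right k =>
      intro _
      rw [Fin.lt_def, merge_natAdd, merge_castAdd, not_lt]
      exact (lt_liftVal_of_le hf (by simp [hfi])).le
  | succ v =>
    rw [val_headScPerm_succ, Sc_inv_eq_of_isGreatest (Fin.castAdd_lt_natAdd i (σ'⁻¹ v))]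
    · simp only [Fin.val_natAdd]
      omega
    · rw [Fin.lt_def, merge_natAdd, merge_castAdd, Perm.coe_inv, apply_symm_apply]
      exact liftVal_lt_of_lt hf (by simp [hfi])
    · intro q
      induction q using Fin.addCases with
      | left j => exact fun hij h => absurd h (later_head hij)
      | right k =>
        intro _ hk
        rw [Fin.lt_def, merge_natAdd, merge_castAdd, liftVal_lt_iff hf, hfi] at hk
        rw [Fin.le_def, merge_natAdd, merge_natAdd, Perm.coe_inv, apply_symm_apply]
        exact (liftVal_strictMono f).monotone (by rw [Fin.val_succ] at hk; omega)

lemma prod_Sc_inv_merge {R : Type*} [CommMonoid R] (w : ℕ → R) {f : Fin a → Fin (m + 1)}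
    (hf : Monotone f) (σ' : Perm (Fin m)) :
    ∏ x ∈ range (a + m), w (Sc (merge f σ' hf)⁻¹ x) =
      (∏ t, w (headScPerm σ' (f t))) * ∏ x ∈ range m, w (Sc σ'⁻¹ x) := by
  rw [prod_range_add, ← Fin.prod_univ_eq_prod_range, ← Fin.prod_univ_eq_prod_range,
    ← Fin.prod_univ_eq_prod_range (fun x => w (Sc σ'⁻¹ x))]
  congr 1
  · exact prod_congr rfl fun t _ => congrArg w (Sc_inv_merge_castAdd hf σ' t)
  · exact prod_congr rfl fun k _ =>
      congrArg w (Sc_inv_natAdd (merge_natAdd_lt_merge_natAdd_iff hf σ') k)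

end Saillance

section Bijection

variable {a m : ℕ}

lemma sum_Des_subset_DesComp_cons {R : Type*} [CommSemiring R] (w : ℕ → R) {J : List ℕ}
    (hJ : J.sum = m) :
    ∑ σ ∈ univ.filter (fun σ : Perm (Fin (a + m)) => Des σ ⊆ DesComp (a :: J)),
        ∏ x ∈ range (a + m), w (Sc σ⁻¹ x) =
      ∑ p ∈ univ.filter (fun f : Fin a → Fin (m + 1) => ∀ u v : Fin a, u ≤ v → f u ≤ f v) ×ˢ
          univ.filter (fun σ' : Perm (Fin m) => Des σ' ⊆ DesComp J),
        (∏ t, w (headScPerm p.2 (p.1 t))) * ∏ x ∈ range m, w (Sc p.2⁻¹ x) := by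
  have monotone_of_mem {p : (Fin a → Fin (m + 1)) × Perm (Fin m)}
      (hp : p ∈ univ.filter (fun f : Fin a → Fin (m + 1) => ∀ u v : Fin a, u ≤ v → f u ≤ f v) ×ˢ
        univ.filter (fun σ' : Perm (Fin m) => Des σ' ⊆ DesComp J)) : Monotone p.1 :=
    fun u v huv => (mem_filter.1 (mem_product.1 hp).1).2 u v huv
  symm
  refine sum_bij' (fun p hp => merge p.1 p.2 (monotone_of_mem hp))
    (fun σ _ => (headCode σ, tailStd σ)) ?_ ?_ ?_ ?_ ?_
  · intro p hp
    simpa using Des_merge_subset hJ (monotone_of_mem hp) (mem_filter.1 (mem_product.1 hp).2).2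
  · intro σ hσ
    replace hσ := (mem_filter.1 hσ).2
    simpa using ⟨fun u v huv => monotone_headCode (strictMono_comp_castAdd_of_Des_subset hσ) huv,
      Des_tailStd_subset hσ⟩
  · intro p hp
    exact Prod.ext (headCode_merge _ _) (tailStd_merge _ _)
  · intro σ hσ
    exact merge_headCode_tailStd (strictMono_comp_castAdd_of_Des_subset (mem_filter.1 hσ).2)
  · intro p hp
    exact (prod_Sc_inv_merge w (monotone_of_mem hp) p.2).symm

lemma sum_monotone_prod_X_comp_perm (k : ℕ) (g : Perm (Fin (m + 1))) :
    ∑ f ∈ univ.filter (fun f : Fin k → Fin (m + 1) => ∀ u v : Fin k, u ≤ v → f u ≤ f v),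
      ∏ t, (MvPolynomial.X (g (f t) : ℕ) : MvPolynomial ℕ ℤ) = hpoly k m :=
  sum_monotone_prod_comp_perm (fun v : Fin (m + 1) => MvPolynomial.X (v : ℕ)) g

lemma sum_Des_subset_DesComp_cons_eq_hpoly_mul {J : List ℕ} (hJ : J.sum = m) :
    ∑ σ ∈ univ.filter (fun σ : Perm (Fin (a + m)) => Des σ ⊆ DesComp (a :: J)),
        ∏ x ∈ range (a + m), (MvPolynomial.X (Sc σ⁻¹ x) : MvPolynomial ℕ ℤ) =
      hpoly a m * ∑ σ' ∈ univ.filter (fun σ' : Perm (Fin m) => Des σ' ⊆ DesComp J),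
        ∏ x ∈ range m, (MvPolynomial.X (Sc σ'⁻¹ x) : MvPolynomial ℕ ℤ) := by
  rw [sum_Des_subset_DesComp_cons _ hJ, sum_product_right, mul_sum]
  refine sum_congr rfl fun σ' _ => ?_
  dsimp only
  rw [← sum_mul, sum_monotone_prod_X_comp_perm]

end Bijection

end Paper

theorem flagged_product_formula_scode_general (n : ℕ) (I : List ℕ)
    (hsum : I.sum = n) :
    ∑ σ ∈ Finset.univ.filter
        (fun σ : Equiv.Perm (Fin n) => Paper.Des σ ⊆ Paper.DesComp I),
        ∏ i ∈ Finset.range n, (MvPolynomial.X (Paper.Sc σ⁻¹ i) : MvPolynomial ℕ ℤ) =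
      ∏ j ∈ Finset.range I.length, Paper.hpoly (I.getD j 0) ((I.drop (j + 1)).sum) := by
  induction I generalizing n with
  | nil =>
    obtain rfl : n = 0 := hsum.symm
    simp [Paper.Des]
  | cons a J ih =>
    subst hsum
    rw [List.sum_cons, Paper.sum_Des_subset_DesComp_cons_eq_hpoly_mul rfl, ih _ rfl,
      List.length_cons, Finset.prod_range_succ']
    simp [mul_comm]

/-- Flagged product formula for inverse saillance codes: for a composition `I = (i_1,…,i_r)`
of `n`, the generating function of the saillance codes of the inverses over
`{σ | Des(σ) ⊆ Des(I)}` is `h_{i_1}(X_{i_2+⋯+i_r}) ⋯ h_{i_{r-1}}(X_{i_r}) h_{i_r}(X_0)`. -/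
theorem flagged_product_formula_scode (n : ℕ) (I : List ℕ)
    (hpos : ∀ p ∈ I, 0 < p) (hsum : I.sum = n) :
    ∑ σ ∈ Finset.univ.filter
        (fun σ : Equiv.Perm (Fin n) => Paper.Des σ ⊆ Paper.DesComp I),
        ∏ i ∈ Finset.range n, (MvPolynomial.X (Paper.Sc σ⁻¹ i) : MvPolynomial ℕ ℤ) =
      ∏ j ∈ Finset.range I.length, Paper.hpoly (I.getD j 0) ((I.drop (j + 1)).sum) :=
  flagged_product_formula_scode_general n I hsum
end

section
/- Single-insertion shuffle lemma for the saillance code: let β ∈ S_n and let 1⧢_i β be the permutation obtained by shifting β up by 1 and inserting the letter 1 at position i+1. Then the first component of the saillance code of 1⧢_i β equals τ_S(β)(i), where τ_S(β)(0) = 0 and τ_S(β)(i) = n + 1 − β(i) for 1 ≤ i ≤ n; moreover the remaining components of the saillance code of 1⧢_i β equal the saillance code of β. -/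
open Finset

/-! Deleting the letter `1` from `1⧢_i β` and lowering the other letters by one gives back `β`:
positions of `β` sit inside those of `1⧢_i β` through the order embedding `Fin.succAbove i`, and
letters go up by one. Hence, for every letter `v + 1` of `1⧢_i β`, the positions to its left
carrying a larger letter are exactly the images of those for `v` in `β`, which gives the tail of
the code. For the letter `1` itself every letter to its left is larger, so the relevant letter is
the one just before it, namely `β(i) + 1` (in 1-based positions). -/

namespace Paper

open Equiv

variable {n : ℕ}

def saillanceSet (σ : Perm (Fin n)) (v : Fin n) : Finset (Fin n) :=
  univ.filter fun j => j < σ⁻¹ v ∧ v < σ j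

theorem Sc_eq_dite (σ : Perm (Fin n)) (v : Fin n) :
    Sc σ v = if h : (saillanceSet σ v).Nonempty then n - σ ((saillanceSet σ v).max' h) else 0 :=
  dif_pos v.isLt

theorem Sc_of_le (σ : Perm (Fin n)) {i : ℕ} (h : n ≤ i) : Sc σ i = 0 :=
  dif_neg h.not_gt

theorem saillanceSet_zero (τ : Perm (Fin (n + 1))) : saillanceSet τ 0 = Iio (τ⁻¹ 0) := by
  ext j
  simp only [saillanceSet, mem_filter, mem_univ, true_and, mem_Iio, and_iff_left_iff_imp,
    Fin.pos_iff_ne_zero]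
  rintro hj h0
  rw [← h0] at hj
  simp at hj

theorem Sc_zero_of_apply_zero {τ : Perm (Fin (n + 1))} (h : τ 0 = 0) : Sc τ 0 = 0 := by
  have hinv : τ⁻¹ 0 = 0 := by rw [Perm.inv_eq_iff_eq, h]
  simpa [saillanceSet_zero, hinv, bot_eq_zero] using Sc_eq_dite τ 0

theorem Sc_zero_of_apply_succ {τ : Perm (Fin (n + 1))} {k : Fin n} (h : τ k.succ = 0) :
    Sc τ 0 = n + 1 - τ k.castSucc := by
  have hinv : τ⁻¹ 0 = k.succ := by rw [Perm.inv_eq_iff_eq, h]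
  have hne : (Iio k.succ).Nonempty := ⟨k.castSucc, mem_Iio.mpr k.castSucc_lt_succ⟩
  have hmax : (Iio k.succ).max' hne = k.castSucc :=
    le_antisymm (max'_le _ _ _ fun j hj => Fin.le_castSucc_iff.mpr (mem_Iio.mp hj))
      (le_max' _ _ (mem_Iio.mpr k.castSucc_lt_succ))
  simpa [saillanceSet_zero, hinv, hne, hmax] using Sc_eq_dite τ 0

section Insertion

variable {τ : Perm (Fin (n + 1))} {σ : Perm (Fin n)} {p : Fin (n + 1)}

theorem saillanceSet_succ (hp : τ p = 0) (h : ∀ j, τ (p.succAbove j) = (σ j).succ)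
    (v : Fin n) : saillanceSet τ v.succ = (saillanceSet σ v).image p.succAbove := by
  have hinv : τ⁻¹ v.succ = p.succAbove (σ⁻¹ v) := by
    rw [Perm.inv_eq_iff_eq, h]
    simp
  ext j
  simp only [saillanceSet, mem_filter, mem_univ, true_and, mem_image, hinv]
  obtain rfl | ⟨j, rfl⟩ := Fin.eq_self_or_eq_succAbove p j
  · simp [hp, Fin.succAbove_ne]
  · simp [h, Fin.succAbove_lt_succAbove_iff, (Fin.strictMono_succAbove p).injective.eq_iff]

theorem Sc_succ_of_apply_succAbove (hp : τ p = 0) (h : ∀ j, τ (p.succAbove j) = (σ j).succ)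
    (v : Fin n) : Sc τ v.succ = Sc σ v := by
  rw [Sc_eq_dite, Sc_eq_dite, saillanceSet_succ hp h]
  by_cases hne : (saillanceSet σ v).Nonempty
  · rw [dif_pos (hne.image _), dif_pos hne, max'_image (Fin.strictMono_succAbove p).monotone, h,
      Fin.val_succ, Nat.add_sub_add_right]
  · rw [dif_neg (by simpa using hne), dif_neg hne]

theorem Sc_add_one_of_apply_succAbove (hp : τ p = 0)
    (h : ∀ j, τ (p.succAbove j) = (σ j).succ) (t : ℕ) : Sc τ (t + 1) = Sc σ t := by
  rcases lt_or_ge t n with ht | ht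
  · exact Sc_succ_of_apply_succAbove hp h ⟨t, ht⟩
  · rw [Sc_of_le τ (by omega), Sc_of_le σ ht]

end Insertion

end Paper

/-- Single-insertion shuffle lemma for the saillance code: if `βi = 1⧢_i β`, then the first
component of `Sc(βi)` is `τ_S(β)(i)` and the remaining components are `Sc(β)`. -/
theorem scode_single_insertion (n : ℕ) (β : Equiv.Perm (Fin n)) (i : ℕ) (hi : i ≤ n)
    (βi : Equiv.Perm (Fin (n + 1)))
    (hlt : ∀ (j : Fin (n + 1)) (hj : (j : ℕ) < i),
      (βi j : ℕ) = (β ⟨(j : ℕ), by omega⟩ : ℕ) + 1)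
    (heq : ∀ j : Fin (n + 1), (j : ℕ) = i → (βi j : ℕ) = 0)
    (hgt : ∀ (j : Fin (n + 1)) (hj : i < (j : ℕ)),
      (βi j : ℕ) = (β ⟨(j : ℕ) - 1, by have := j.isLt; omega⟩ : ℕ) + 1) :
    Paper.Sc βi 0 = Paper.tauS β i ∧ ∀ t : ℕ, Paper.Sc βi (t + 1) = Paper.Sc β t := by
  let p : Fin (n + 1) := ⟨i, by omega⟩
  have hp : βi p = 0 := Fin.ext (heq p rfl)
  have hτ : ∀ j : Fin n, βi (p.succAbove j) = (β j).succ := by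
    intro j
    ext
    rcases lt_or_ge (j : ℕ) i with hj | hj
    · rw [Fin.succAbove_of_castSucc_lt _ _ hj]
      exact hlt _ hj
    · rw [Fin.succAbove_of_le_castSucc _ _ hj]
      exact hgt _ (Nat.lt_succ_of_le hj)
  refine ⟨?_, Paper.Sc_add_one_of_apply_succAbove hp hτ⟩
  cases i with
  | zero => simp [Paper.Sc_zero_of_apply_zero hp, Paper.tauS]
  | succ k =>
    rw [Paper.Sc_zero_of_apply_succ (k := ⟨k, by omega⟩) hp, hlt _ (Nat.lt_succ_self k),
      Paper.tauS, dif_pos ⟨k.succ_pos, hi⟩]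
    exact Nat.add_sub_add_right _ _ _
end

section
/- Interval property of τ_M: for β ∈ S_n and 0 ≤ k ≤ n, the set { τ_M(β)(i) : 0 ≤ i ≤ k } equals the interval [d, d+k], where d is the number of descents of β strictly greater than k. -/
open Finset

/-!
Write `a(i)` for the number of descents of `β` beyond position `i`. Since the descents up to `i`,
together with the rises up to `i`, number `i + 1`, the defining formula simplifies to
`τ_M(β)(i) = a(i)` at a descent and `τ_M(β)(i) = a(i) + i` at a rise. Passing from `k` to
`k + 1`, a descent at `k + 1` lowers `a` by one and `τ_M(β)(k + 1)` is the new left end of the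
interval, while a rise keeps `a` and `τ_M(β)(k + 1)` is the new right end.
-/

namespace Paper

def tauOfDescents (D : Finset ℕ) (i : ℕ) : ℕ :=
  if i ∈ D then #D - #{d ∈ D | d ≤ i}
  else #D + #{r ∈ range (i + 1) | r ∉ D} - 1

theorem tauM_eq_tauOfDescents {n : ℕ} (β : Equiv.Perm (Fin n)) :
    tauM β = tauOfDescents (Des β) :=
  rfl

theorem card_filter_le_add_card_filter_lt (D : Finset ℕ) (i : ℕ) :
    #{d ∈ D | d ≤ i} + #{d ∈ D | i < d} = #D := by
  simpa only [not_le] using card_filter_add_card_filter_not (s := D) (p := (· ≤ i))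

theorem card_filter_le_add_card_filter_range_notMem (D : Finset ℕ) (i : ℕ) :
    #{d ∈ D | d ≤ i} + #{r ∈ range (i + 1) | r ∉ D} = i + 1 := by
  have h : {d ∈ D | d ≤ i} = {r ∈ range (i + 1) | r ∈ D} := by
    ext r
    simp only [mem_filter, mem_range, Nat.lt_add_one_iff, and_comm]
  rw [h, card_filter_add_card_filter_not, card_range]

theorem tauOfDescents_eq (D : Finset ℕ) (i : ℕ) :
    tauOfDescents D i = #{d ∈ D | i < d} + if i ∈ D then 0 else i := by
  have hsplit := card_filter_le_add_card_filter_lt D i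
  unfold tauOfDescents
  split_ifs with hi
  · omega
  · have hrises := card_filter_le_add_card_filter_range_notMem D i
    omega

theorem card_filter_lt_eq_succ (D : Finset ℕ) (k : ℕ) :
    #{d ∈ D | k < d} = #{d ∈ D | k + 1 < d} + if k + 1 ∈ D then 1 else 0 := by
  have h : {d ∈ D | k < d} = {d ∈ D | k + 1 < d ∨ d = k + 1} :=
    filter_congr fun d _ => by omega
  rw [h, filter_or, card_union_of_disjoint (disjoint_filter.2 fun d _ h1 h2 => by omega),
    filter_eq' D (k + 1)]
  split_ifs <;> simp

theorem image_range_tauOfDescents (D : Finset ℕ) (k : ℕ) :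
    (range (k + 1)).image (tauOfDescents D) =
      Icc #{d ∈ D | k < d} (#{d ∈ D | k < d} + k) := by
  induction k with
  | zero => simp [tauOfDescents_eq]
  | succ k ih =>
    rw [range_add_one, image_insert, ih, tauOfDescents_eq, card_filter_lt_eq_succ D k]
    ext x
    simp only [mem_insert, mem_Icc]
    split_ifs <;> omega

end Paper

theorem tauM_image_interval_general (n k : ℕ) (β : Equiv.Perm (Fin n)) :
    (Finset.range (k + 1)).image (Paper.tauM β) =
      Finset.Icc (((Paper.Des β).filter fun d => k < d).card)
        ((((Paper.Des β).filter fun d => k < d).card) + k) := by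
  rw [Paper.tauM_eq_tauOfDescents]
  exact Paper.image_range_tauOfDescents (Paper.Des β) k

/-- Interval property of `τ_M`: for `0 ≤ k ≤ n`, the set `{τ_M(β)(i) | 0 ≤ i ≤ k}` is the
interval `[d, d+k]`, where `d` is the number of descents of `β` strictly greater than `k`. -/
theorem tauM_image_interval (n k : ℕ) (hk : k ≤ n) (β : Equiv.Perm (Fin n)) :
    (Finset.range (k + 1)).image (Paper.tauM β) =
      Finset.Icc (((Paper.Des β).filter fun d => k < d).card)
        ((((Paper.Des β).filter fun d => k < d).card) + k) :=
  tauM_image_interval_general n k β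
end

section
/- If permutations u and v are L-adjacent, then the sorted Lehmer codes of u and v are equal (the Lehmer code of v is a rearrangement of the Lehmer code of u). -/
open Finset

namespace Paper

/-- Two words are L-adjacent if `u = w₁ a w₂ c w₃ b w₄` and `v = w₁ b w₂ a w₃ c w₄` for
letters `a < b < c`, where all letters of `w₂` are greater than `b` and all letters of
`w₃, w₄` are smaller than `b` or greater than `c`. -/
def LAdj (u v : List ℕ) : Prop :=
  ∃ (w1 w2 w3 w4 : List ℕ) (a b c : ℕ), a < b ∧ b < c ∧
    u = w1 ++ [a] ++ w2 ++ [c] ++ w3 ++ [b] ++ w4 ∧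
    v = w1 ++ [b] ++ w2 ++ [a] ++ w3 ++ [c] ++ w4 ∧
    (∀ x ∈ w2, b < x) ∧ (∀ x ∈ w3, x < b ∨ c < x) ∧ (∀ x ∈ w4, x < b ∨ c < x)

/-- The Lehmer code of a word `l`: `c_i = #{ j > i | l_j < l_i }`. -/
def LcW (l : List ℕ) (i : ℕ) : ℕ :=
  ((List.range l.length).filter fun j => decide (i < j ∧ l.getD j 0 < l.getD i 0)).length

end Paper

/-!
The Lehmer code of `x :: t` is `#{y ∈ t | y < x}` followed by the code of `t`, so at the
positions of `w` the code of `w ++ t` depends on `t` only through the counts `#{y ∈ t | y < x}`,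
`x ∈ w`. Passing from `u = w₁ a w₂ c w₃ b w₄` to `v = w₁ b w₂ a w₃ c w₄` leaves these counts
unchanged for the letters of `w₁` (the two suffixes are rearrangements of each other), of `w₂`
(which lie above both `b` and `a`) and of `w₃ w₄` (which do not separate `b` from `c`). The two
remaining entries trade places: `a` has the same entry in `u` and `v`, and so have `c` in `u`
and `b` in `v`, both counting one letter below them plus the letters of `w₃ w₄` below `b`.
-/

namespace Paper

section LehmerCode

variable {α : Type*}

def lehmerCode [LT α] [DecidableLT α] : List α → List ℕ
  | [] => []
  | x :: t => t.countP (· < x) :: lehmerCode t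

theorem lehmerCode_cons [LT α] [DecidableLT α] (x : α) (t : List α) :
    lehmerCode (x :: t) = t.countP (· < x) :: lehmerCode t := rfl

theorem exists_lehmerCode_append_eq_append [LT α] [DecidableLT α] {t t' : List α} :
    ∀ {w : List α}, (∀ x ∈ w, t.countP (· < x) = t'.countP (· < x)) →
      ∃ P, lehmerCode (w ++ t) = P ++ lehmerCode t ∧ lehmerCode (w ++ t') = P ++ lehmerCode t'
  | [], _ => ⟨[], rfl, rfl⟩
  | x :: w, hw => by
    obtain ⟨P, hP, hP'⟩ := exists_lehmerCode_append_eq_append fun y hy => hw y (.tail x hy)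
    refine ⟨(w ++ t).countP (· < x) :: P, ?_, ?_⟩
    · rw [List.cons_append, lehmerCode_cons, hP, List.cons_append]
    · rw [List.cons_append, lehmerCode_cons, hP', List.cons_append, List.countP_append,
        List.countP_append, hw x List.mem_cons_self]

variable [LinearOrder α]

theorem countP_lt_eq_of_forall_lt_or_lt {b c : α} (hbc : b < c) {w : List α}
    (hw : ∀ x ∈ w, x < b ∨ c < x) : w.countP (· < b) = w.countP (· < c) :=
  List.countP_congr fun x hx => by
    rcases hw x hx with h | h
    · simp [h, h.trans hbc]
    · simp [(hbc.trans h).not_gt, h.not_gt]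

theorem lehmerCode_perm_of_pivots {a b c : α} (hab : a < b) (hbc : b < c) {w2 w3 w4 : List α}
    (hw2 : ∀ x ∈ w2, b < x) (hw3 : ∀ x ∈ w3, x < b ∨ c < x) (hw4 : ∀ x ∈ w4, x < b ∨ c < x) :
    (lehmerCode (a :: (w2 ++ c :: (w3 ++ b :: w4)))).Perm
      (lehmerCode (b :: (w2 ++ a :: (w3 ++ c :: w4)))) := by
  have hw3' : ∀ x ∈ w3, (b :: w4).countP (· < x) = (c :: w4).countP (· < x) := by
    intro x hx
    rcases hw3 x hx with h | h
    · simp [h.not_gt, (h.trans hbc).not_gt]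
    · simp [h, hbc.trans h]
  have hw2' : ∀ x ∈ w2, (c :: (w3 ++ b :: w4)).countP (· < x) =
      (a :: (w3 ++ c :: w4)).countP (· < x) := by
    intro x hx
    have hbx := hw2 x hx
    simp only [List.countP_cons, List.countP_append, hbx, hab.trans hbx, decide_true, if_true]
    omega
  obtain ⟨P3, hP3, hP3'⟩ := exists_lehmerCode_append_eq_append hw3'
  have hR : lehmerCode (w3 ++ b :: w4) = lehmerCode (w3 ++ c :: w4) := by
    rw [hP3, hP3', lehmerCode_cons, lehmerCode_cons, countP_lt_eq_of_forall_lt_or_lt hbc hw4]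
  obtain ⟨P2, hP2, hP2'⟩ := exists_lehmerCode_append_eq_append hw2'
  have hw2a : w2.countP (· < a) = 0 := List.countP_eq_zero.2 fun x hx => by
    simpa using (hab.trans (hw2 x hx)).le
  have hw2b : w2.countP (· < b) = 0 := List.countP_eq_zero.2 fun x hx => by
    simpa using (hw2 x hx).le
  have hA : (w2 ++ c :: (w3 ++ b :: w4)).countP (· < a) = (w3 ++ c :: w4).countP (· < a) := by
    simp [List.countP_append, hw2a, (hab.trans hbc).not_gt, hab.not_gt]
  have hB : (w2 ++ a :: (w3 ++ c :: w4)).countP (· < b) = (w3 ++ b :: w4).countP (· < c) := by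
    simp only [List.countP_append, List.countP_cons, hw2b, hab, hbc, hbc.not_gt, decide_true,
      decide_false, if_true, Bool.false_eq_true, if_false, countP_lt_eq_of_forall_lt_or_lt hbc hw3,
      countP_lt_eq_of_forall_lt_or_lt hbc hw4]
    omega
  rw [lehmerCode_cons, lehmerCode_cons, hP2, hP2', lehmerCode_cons, lehmerCode_cons, hR, hA, hB]
  exact (List.perm_middle.cons _).trans ((List.Perm.swap _ _ _).symm.trans
    (List.perm_middle.symm.cons _))

end LehmerCode

theorem LcW_cons_succ (x : ℕ) (t : List ℕ) (k : ℕ) : LcW (x :: t) (k + 1) = LcW t k := by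
  simp [LcW, List.range_succ_eq_map, List.filter_map, Function.comp_def]

theorem map_getD_range_length {α : Type*} (l : List α) (d : α) :
    (List.range l.length).map (l.getD · d) = l :=
  List.ext_getElem (by simp) fun i _ _ => by simp [List.getD_eq_getElem?_getD, *]

theorem LcW_cons_zero (x : ℕ) (t : List ℕ) : LcW (x :: t) 0 = t.countP (· < x) := by
  conv_rhs => rw [← map_getD_range_length t 0]
  simp [LcW, List.range_succ_eq_map, List.filter_map, Function.comp_def,
    List.countP_eq_length_filter]

theorem map_LcW_range_eq_lehmerCode : ∀ l : List ℕ,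
    (List.range l.length).map (LcW l) = lehmerCode l
  | [] => rfl
  | x :: t => by
    rw [List.length_cons, List.range_succ_eq_map, List.map_cons, List.map_map, lehmerCode_cons,
      LcW_cons_zero, ← map_LcW_range_eq_lehmerCode t]
    congr 1
    exact List.map_congr_left fun k _ => LcW_cons_succ x t k

end Paper

/-- If `u` and `v` are L-adjacent words, then the Lehmer code of `v` is a rearrangement of
the Lehmer code of `u`; in particular their sorted Lehmer codes are equal. -/
theorem LAdj_sorted_lehmer_code_eq (u v : List ℕ) (h : Paper.LAdj u v) :
    ((List.range u.length).map (Paper.LcW u)).Perm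
      ((List.range v.length).map (Paper.LcW v)) := by
  obtain ⟨w1, w2, w3, w4, a, b, c, hab, hbc, rfl, rfl, hw2, hw3, hw4⟩ := h
  simp only [Paper.map_LcW_range_eq_lehmerCode, List.append_assoc,
    List.cons_append, List.nil_append]
  have hsuffix : (a :: (w2 ++ c :: (w3 ++ b :: w4))).Perm (b :: (w2 ++ a :: (w3 ++ c :: w4))) := by
    simp only [List.perm_iff_count, List.count_cons, List.count_append]
    omega
  obtain ⟨P, hP, hP'⟩ := Paper.exists_lehmerCode_append_eq_append (w := w1)
    fun x _ => hsuffix.countP_eq _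
  rw [hP, hP']
  exact (Paper.lehmerCode_perm_of_pivots hab hbc hw2 hw3 hw4).append_left P
end
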